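/- arXiv:2211.00378 — 7 statements merged into one kernel-verified Lean document; each statement's English description precedes it below -/
import Mathlib

section
/- Let T be a tree on leaf set X, let Y ⊆ X, let f be a character on X, and let f' be the restriction of f to Y. Then the parsimony score of f' on the induced subtree T(Y) is at most the parsimony score of f on T, i.e., l_{f'}(T(Y)) ≤ l_f(T). -/
open SimpleGraph

/-- A tree on leaf set `X`: an unrooted tree whose degree-1 (or isolated) vertices
are exactly the leaves, identified with `X`, and all vertices have degree at most 3. -/
structure PTree (X : Type) where
  V : Type
  [fintypeV : Fintype V]
  [decEqV : DecidableEq V]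
  G : SimpleGraph V
  [decAdj : DecidableRel G.Adj]
  isTree : G.IsTree
  leaf : X → V
  leaf_inj : Function.Injective leaf
  leaf_deg : ∀ x, G.degree (leaf x) ≤ 1
  leaf_surj : ∀ v, G.degree v ≤ 1 → ∃ x, leaf x = v
  max_deg : ∀ v, G.degree v ≤ 3

attribute [instance] PTree.fintypeV PTree.decEqV PTree.decAdj

variable {X Y S : Type}

/-- The set of vertices on the (unique) path between `u` and `v` in the tree,
characterized metrically. -/
def PTree.pathSet (T : PTree X) (u v : T.V) : Set T.V :=
  {w | T.G.dist u w + T.G.dist w v = T.G.dist u v}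

/-- The number of mutation edges of the vertex labelling `g`. -/
noncomputable def PTree.mutCount (T : PTree X) (g : T.V → S) : ℕ :=
  {e ∈ T.G.edgeSet | ¬ (Sym2.map g e).IsDiag}.ncard

/-- The parsimony score of a character `f` on the leaves of `T`: the minimum number of
mutation edges over all extensions of `f` to the vertices of `T`. -/
noncomputable def PTree.lscore (T : PTree X) (f : X → S) : ℕ :=
  sInf {n | ∃ g : T.V → S, (∀ x, g (T.leaf x) = f x) ∧ T.mutCount g = n}

/-- The `t`-state maximum parsimony distance (with `t = ⊤` the unbounded version). -/
noncomputable def dMP [Fintype X] (t : ℕ∞) (T1 T2 : PTree X) : ℕ :=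
  sSup {n | ∃ f : X → ℕ, ((Finset.univ.image f).card : ℕ∞) ≤ t ∧
      n = Nat.dist (T1.lscore f) (T2.lscore f)}

/-- `TY` is (a copy of) the subtree of `T` induced by the leaves in the image of `incl`. -/
def IsInducedSubtree (T : PTree X) (incl : Y → X) (TY : PTree Y) : Prop :=
  ∃ φ : TY.V → T.V, Function.Injective φ ∧
    (Set.range φ =
      {v | ∃ y1 y2 : Y, v ∈ T.pathSet (T.leaf (incl y1)) (T.leaf (incl y2))}) ∧
    (∀ y, φ (TY.leaf y) = T.leaf (incl y)) ∧
    (∀ u w, TY.G.Adj u w ↔ T.G.Adj (φ u) (φ w))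

/-- `T'` is obtained from `T` by suppressing one degree-2 vertex. -/
def SuppressStep {Y : Type} (T T' : PTree Y) : Prop :=
  ∃ (v0 : T.V) (φ : T'.V → T.V),
    T.G.degree v0 = 2 ∧ Function.Injective φ ∧
    (Set.range φ = {v | v ≠ v0}) ∧
    (∀ y, φ (T'.leaf y) = T.leaf y) ∧
    (∀ u w, T'.G.Adj u w ↔
      (T.G.Adj (φ u) (φ w) ∨ (T.G.Adj (φ u) v0 ∧ T.G.Adj v0 (φ w))))

def NoDeg2 {Y : Type} (T : PTree Y) : Prop := ∀ v : T.V, T.G.degree v ≠ 2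

/-- `TR` is the restriction `T|_Y`: obtained from the induced subtree `T(Y)` by
suppressing all degree-2 vertices. -/
def IsRestriction (T : PTree X) (incl : Y → X) (TR : PTree Y) : Prop :=
  ∃ TY : PTree Y, IsInducedSubtree T incl TY ∧
    Relation.ReflTransGen SuppressStep TY TR ∧ NoDeg2 TR

/-- The four leaves of a quartet are pairwise distinct. -/
def QDistinct (a b c d : X) : Prop :=
  a ≠ b ∧ a ≠ c ∧ a ≠ d ∧ b ≠ c ∧ b ≠ d ∧ c ≠ d

/-- `T` displays the quartet topology `ab|cd`: the `a`–`b` path and the `c`–`d` path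
are disjoint. -/
def displays (T : PTree X) (a b c d : X) : Prop :=
  T.pathSet (T.leaf a) (T.leaf b) ∩ T.pathSet (T.leaf c) (T.leaf d) = ∅

/-- The quartet `{a,b,c,d}` is compatible with `(T1, T2)`: both trees display the same
topology on it. -/
def Compatible (T1 T2 : PTree X) (a b c d : X) : Prop :=
  (displays T1 a b c d ↔ displays T2 a b c d) ∧
  (displays T1 a c b d ↔ displays T2 a c b d) ∧
  (displays T1 a d b c ↔ displays T2 a d b c)

/-- The legs (as vertex sets in `T`) of the quartet `ab|cd`. -/
def legs (T : PTree X) (a b c d : X) : Set T.V :=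
  T.pathSet (T.leaf a) (T.leaf b) ∪ T.pathSet (T.leaf c) (T.leaf d)

/-- `q` is an incompatible quartet of `(T1,T2)`, displayed as `ab|cd` in `T1`. -/
def IncompatQuartet (T1 T2 : PTree X) (q : X × X × X × X) : Prop :=
  QDistinct q.1 q.2.1 q.2.2.1 q.2.2.2 ∧
  displays T1 q.1 q.2.1 q.2.2.1 q.2.2.2 ∧
  ¬ Compatible T1 T2 q.1 q.2.1 q.2.2.1 q.2.2.2

/-- The legs in `T` of the quartet encoded by the tuple `q`. -/
def qlegs (T : PTree X) (q : X × X × X × X) : Set T.V :=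
  legs T q.1 q.2.1 q.2.2.1 q.2.2.2

/-- The edges of the subtree of `T` induced by the leaves in `Y`. -/
def subtreeEdges [DecidableEq X] (T : PTree X) (Yf : Finset X) : Set (Sym2 T.V) :=
  {e | e ∈ T.G.edgeSet ∧ ∃ x ∈ Yf, ∃ y ∈ Yf,
    ∀ v ∈ e, v ∈ T.pathSet (T.leaf x) (T.leaf y)}

/-- `T1` and `T2` have equal restrictions to `Yf` (they display the same quartet
topologies on `Yf`). -/
def RestrictEq (T1 T2 : PTree X) (Yf : Finset X) : Prop :=
  ∀ a b c d : X, a ∈ Yf → b ∈ Yf → c ∈ Yf → d ∈ Yf → Compatible T1 T2 a b c d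

def IsPartition [DecidableEq X] (F : Finset (Finset X)) : Prop :=
  (∅ ∉ F) ∧ ∀ x : X, ∃! Yf, Yf ∈ F ∧ x ∈ Yf

/-- `F` is an agreement forest of `T1` and `T2`. -/
def AgreementForest [DecidableEq X] (T1 T2 : PTree X) (F : Finset (Finset X)) : Prop :=
  IsPartition F ∧ (∀ Yf ∈ F, RestrictEq T1 T2 Yf) ∧
  (∀ Yf ∈ F, ∀ Z ∈ F, Yf ≠ Z →
    subtreeEdges T1 Yf ∩ subtreeEdges T1 Z = ∅ ∧
    subtreeEdges T2 Yf ∩ subtreeEdges T2 Z = ∅)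

/-- The TBR distance: one less than the minimum number of components of an agreement
forest (Allen–Steel). -/
noncomputable def dTBR [Fintype X] [DecidableEq X] (T1 T2 : PTree X) : ℕ :=
  sInf {n | ∃ F : Finset (Finset X), AgreementForest T1 T2 F ∧ F.card = n + 1}

/-- `lg x = max 1 (log₂ x)`. -/
noncomputable def lgR (x : ℝ) : ℝ := max 1 (Real.logb 2 x)

/-- restricting a character to `Y` can only decrease the parsimony score:
`l_{f'}(T(Y)) ≤ l_f(T)`. -/
theorem parsimony_restriction_le
    {X Y S : Type} (T : PTree X) (incl : Y → X) (hincl : Function.Injective incl)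
    (TY : PTree Y) (hTY : IsInducedSubtree T incl TY)
    (f : X → S) :
    TY.lscore (fun y => f (incl y)) ≤ T.lscore f := by
  obtain ⟨φ, hinj, hrange, hleaf, hadj⟩ := hTY
  have key : ∀ g : T.V → S, (∀ x, g (T.leaf x) = f x) →
      TY.lscore (fun y => f (incl y)) ≤ T.mutCount g := by
    intro g hg
    have hle : TY.mutCount (g ∘ φ) ≤ T.mutCount g := by
      apply Set.ncard_le_ncard_of_injOn (Sym2.map φ)
      · intro e he
        obtain ⟨he1, he2⟩ := he
        refine ⟨?_, ?_⟩
        · induction e with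
          | _ u w =>
            simp only [Sym2.map_pair_eq, SimpleGraph.mem_edgeSet] at he1 ⊢
            exact (hadj u w).mp he1
        · rw [Sym2.map_map]
          exact he2
      · exact (Sym2.map.injective hinj).injOn
    have h1 : TY.lscore (fun y => f (incl y)) ≤ TY.mutCount (g ∘ φ) := by
      apply Nat.sInf_le
      exact ⟨g ∘ φ, fun y => by simp [Function.comp, hleaf y, hg], rfl⟩
    exact h1.trans hle
  rcases isEmpty_or_nonempty S with hS | hS
  · have hTYne : Nonempty TY.V := TY.isTree.isConnected.nonempty
    have hempty : {n | ∃ g : TY.V → S, (∀ y, g (TY.leaf y) = f (incl y)) ∧ TY.mutCount g = n} = ∅ := by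
      ext n
      simp only [Set.mem_setOf_eq, Set.mem_empty_iff_false, iff_false, not_exists]
      intro g _
      exact (hS.false (g (Classical.arbitrary TY.V))).elim
    show sInf _ ≤ _
    rw [hempty, Nat.sInf_empty]
    exact Nat.zero_le _
  · classical
    let g0 : T.V → S := fun v => if h : ∃ x', T.leaf x' = v then f h.choose else Classical.arbitrary S
    have hg0 : ∀ x, g0 (T.leaf x) = f x := by
      intro x
      show (if h : ∃ x', T.leaf x' = T.leaf x then f h.choose else Classical.arbitrary S) = f x
      have hx : ∃ x', T.leaf x' = T.leaf x := ⟨x, rfl⟩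
      simp only [dif_pos hx]
      congr 1
      exact T.leaf_inj hx.choose_spec
    have hA : Set.Nonempty {n | ∃ g : T.V → S, (∀ x, g (T.leaf x) = f x) ∧ T.mutCount g = n} :=
      ⟨T.mutCount g0, g0, hg0, rfl⟩
    obtain ⟨g, hg, hn⟩ := Nat.sInf_mem hA
    exact (key g hg).trans (le_of_eq hn)
end

section
/- Let T be a tree on X, Y ⊆ X, and let f̄ be a labelling of the vertices of the induced subtree T(Y). Define the parsimonious extension f̃ of f̄ to T by f̃(v) = f̄(v) for v in T(Y), and f̃(v) = f̄(w_v) for v not in T(Y), where w_v is the vertex of T(Y) closest to v. Then the number of mutation edges of T under f̃ equals the number of mutation edges of T(Y) under f̄. -/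
open SimpleGraph

variable {X Y S : Type}

variable {V : Type*} [DecidableEq V] {G : SimpleGraph V}

lemma tree_path_length (hT : G.IsTree) {u v : V} (p : G.Walk u v) (hp : p.IsPath) :
    p.length = G.dist u v := by
  obtain ⟨q, hq, hlen⟩ := hT.isConnected.exists_path_of_dist u v
  rw [(hT.existsUnique_path u v).unique hp hq, hlen]

/-- support membership gives distance additivity -/
lemma dist_add_of_mem_support (hT : G.IsTree) {u v c : V} {p : G.Walk u v}
    (hp : p.IsPath) (hc : c ∈ p.support) :
    G.dist u c + G.dist c v = G.dist u v := by
  rw [← tree_path_length hT p hp,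
      ← tree_path_length hT (p.takeUntil c hc) (hp.takeUntil hc),
      ← tree_path_length hT (p.dropUntil c hc) (hp.dropUntil hc),
      ← SimpleGraph.Walk.length_append, p.take_spec hc]

/-- distance additivity gives support membership -/
lemma mem_support_of_dist_add (hT : G.IsTree) {u v c : V} {p : G.Walk u v}
    (hp : p.IsPath) (hd : G.dist u c + G.dist c v = G.dist u v) :
    c ∈ p.support := by
  obtain ⟨q1, hq1, hl1⟩ := hT.isConnected.exists_path_of_dist u c
  obtain ⟨q2, hq2, hl2⟩ := hT.isConnected.exists_path_of_dist c v
  have hlen : (q1.append q2).length = G.dist u v := by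
    rw [SimpleGraph.Walk.length_append, hl1, hl2, hd]
  have hpath := (q1.append q2).isPath_of_length_eq_dist hlen
  rw [(hT.existsUnique_path u v).unique hp hpath]
  exact SimpleGraph.Walk.subset_support_append_left _ _ q1.end_mem_support

/-- key gluing lemma: if paths a→u and u→b meet only at u, then u is between a and b -/
lemma tree_glue (hT : G.IsTree) {a u b : V}
    (h : ∀ c, G.dist a c + G.dist c u = G.dist a u →
      G.dist u c + G.dist c b = G.dist u b → c = u) :
    G.dist a u + G.dist u b = G.dist a b := by
  obtain ⟨p, hp, hlp⟩ := hT.isConnected.exists_path_of_dist a u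
  obtain ⟨q, hq, hlq⟩ := hT.isConnected.exists_path_of_dist u b
  have hpath : (p.append q).IsPath := by
    rw [SimpleGraph.Walk.isPath_def, SimpleGraph.Walk.support_append]
    refine List.Nodup.append hp.support_nodup (hq.support_nodup.sublist (List.tail_sublist _)) ?_
    intro c hcp hcq
    have hc1 := dist_add_of_mem_support hT hp hcp
    have hc2 := dist_add_of_mem_support hT hq
      (List.mem_of_mem_tail hcq)
    have := h c hc1 hc2
    subst this
    have : q.support = c :: q.support.tail := by
      rw [← SimpleGraph.Walk.support_eq_cons]
    exact (List.nodup_cons.mp (this ▸ hq.support_nodup)).1 hcq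
  rw [← hlp, ← hlq, ← SimpleGraph.Walk.length_append,
    tree_path_length hT _ hpath]

/-- adjacent vertices have different distances to any vertex -/
lemma tree_adj_dist_ne (hT : G.IsTree) {u v : V} (h : G.Adj u v) (x : V) :
    G.dist x u ≠ G.dist x v := by
  intro heq
  obtain ⟨p, hp, hlp⟩ := hT.isConnected.exists_path_of_dist x u
  by_cases hv : v ∈ p.support
  · have := dist_add_of_mem_support hT hp hv
    have h1 : G.dist v u = 1 := by rw [SimpleGraph.dist_eq_one_iff_adj]; exact h.symm
    omega
  · have hpath : (p.append (SimpleGraph.Walk.cons h SimpleGraph.Walk.nil)).IsPath := by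
      rw [SimpleGraph.Walk.isPath_def, SimpleGraph.Walk.support_append]
      refine List.Nodup.append hp.support_nodup (by simp) ?_
      intro c hcp hcq
      simp only [SimpleGraph.Walk.support_cons, SimpleGraph.Walk.support_nil,
        List.tail_cons, List.mem_singleton] at hcq
      subst hcq; exact hv hcp
    have := tree_path_length hT _ hpath
    rw [SimpleGraph.Walk.length_append, hlp, heq] at this
    simp at this

/-- T5: if v and c are both between u and b, and v is closer to u, then v is between u and c -/
lemma tree_between_trans (hT : G.IsTree) {u b v c : V}
    (hv : G.dist u v + G.dist v b = G.dist u b)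
    (hc : G.dist u c + G.dist c b = G.dist u b)
    (hle : G.dist u v ≤ G.dist u c) :
    G.dist u v + G.dist v c = G.dist u c := by
  obtain ⟨p, hp, hlp⟩ := hT.isConnected.exists_path_of_dist u b
  have hcp : c ∈ p.support := mem_support_of_dist_add hT hp (by omega)
  have hvp : v ∈ p.support := mem_support_of_dist_add hT hp (by omega)
  rw [← p.take_spec hcp, SimpleGraph.Walk.mem_support_append_iff] at hvp
  rcases hvp with hvp | hvp
  · have h1 := dist_add_of_mem_support hT (hp.takeUntil hcp) hvp
    have h2 := tree_path_length hT _ (hp.takeUntil hcp)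
    omega
  · have h1 := dist_add_of_mem_support hT (hp.dropUntil hcp) hvp
    have hco : G.dist v c = G.dist c v := SimpleGraph.dist_comm
    have h3 := hT.isConnected.dist_triangle (u := u) (v := v) (w := c)
    have h4 := hT.isConnected.dist_triangle (u := u) (v := c) (w := v)
    have h5 := hT.isConnected.dist_triangle (u := v) (v := c) (w := b)
    omega

lemma tree_c1_aux (hT : G.IsTree) {x y a b m m' : V}
    (hxy : G.dist x a + G.dist a y = G.dist x y)
    (hm1 : G.dist x m + G.dist m a = G.dist x a)
    (hm2 : G.dist a m + G.dist m b = G.dist a b)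
    (hm'1 : G.dist a m' + G.dist m' y = G.dist a y)
    (hm'2 : G.dist a m' + G.dist m' b = G.dist a b)
    (hle : G.dist a m ≤ G.dist a m') : m = a := by
  have hbet : G.dist a m + G.dist m m' = G.dist a m' :=
    tree_between_trans hT hm2 hm'2 hle
  have h1 : G.dist m y ≤ G.dist m m' + G.dist m' y := hT.isConnected.dist_triangle
  have h2 : G.dist x y ≤ G.dist x m + G.dist m y := hT.isConnected.dist_triangle
  have hma : G.dist m a = G.dist a m := SimpleGraph.dist_comm
  have : G.dist a m = 0 := by omega
  exact (hT.isConnected.dist_eq_zero_iff).mp (hma.trans this)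

/-- C1: a between x and y, c between a and b implies c between x,b or y,b -/
lemma tree_c1 (hT : G.IsTree) {x y a b c : V}
    (hxy : G.dist x a + G.dist a y = G.dist x y)
    (hc : G.dist a c + G.dist c b = G.dist a b) :
    G.dist x c + G.dist c b = G.dist x b ∨ G.dist y c + G.dist c b = G.dist y b := by
  have claim1 : G.dist x a + G.dist a b = G.dist x b ∨
      G.dist y a + G.dist a b = G.dist y b := by
    by_contra hcon
    push_neg at hcon
    obtain ⟨hx, hy⟩ := hcon
    have hgx := tree_glue hT (a := x) (u := a) (b := b)
    have hgy := tree_glue hT (a := y) (u := a) (b := b)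
    have hx' : ¬ ∀ c, G.dist x c + G.dist c a = G.dist x a →
        G.dist a c + G.dist c b = G.dist a b → c = a := fun h => hx (hgx h)
    have hy' : ¬ ∀ c, G.dist y c + G.dist c a = G.dist y a →
        G.dist a c + G.dist c b = G.dist a b → c = a := fun h => hy (hgy h)
    push_neg at hx' hy'
    obtain ⟨m, hm1, hm2, hmne⟩ := hx'
    obtain ⟨m', hm'1, hm'2, hm'ne⟩ := hy'
    rcases le_total (G.dist a m) (G.dist a m') with hle | hle
    · have hm'1' : G.dist a m' + G.dist m' y = G.dist a y := by
        have c1 : G.dist a m' = G.dist m' a := SimpleGraph.dist_comm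
        have c2 : G.dist y m' = G.dist m' y := SimpleGraph.dist_comm
        have c3 : G.dist a y = G.dist y a := SimpleGraph.dist_comm
        omega
      exact hmne (tree_c1_aux hT hxy hm1 hm2 hm'1' hm'2 hle)
    · have hxy' : G.dist y a + G.dist a x = G.dist y x := by
        have h1 : G.dist x a = G.dist a x := SimpleGraph.dist_comm
        have h2 : G.dist y a = G.dist a y := SimpleGraph.dist_comm
        have h3 : G.dist x y = G.dist y x := SimpleGraph.dist_comm
        omega
      have hm1' : G.dist a m + G.dist m x = G.dist a x := by
        have c1 : G.dist a m = G.dist m a := SimpleGraph.dist_comm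
        have c2 : G.dist x m = G.dist m x := SimpleGraph.dist_comm
        have c3 : G.dist a x = G.dist x a := SimpleGraph.dist_comm
        omega
      exact hm'ne (tree_c1_aux hT hxy' hm'1 hm'2 hm1' hm2 hle)
  have htri := hT.isConnected.dist_triangle (u := x) (v := c) (w := b)
  have htri2 := hT.isConnected.dist_triangle (u := x) (v := a) (w := c)
  have htri3 := hT.isConnected.dist_triangle (u := y) (v := c) (w := b)
  have htri4 := hT.isConnected.dist_triangle (u := y) (v := a) (w := c)
  rcases claim1 with h | h
  · left; omega
  · right; omega

lemma tree_proj_unique (hT : G.IsTree) {R : Set V}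
    (hconv : ∀ a ∈ R, ∀ b ∈ R, ∀ c, G.dist a c + G.dist c b = G.dist a b → c ∈ R)
    {u a b : V} (ha : a ∈ R) (hb : b ∈ R)
    (hma : ∀ r ∈ R, G.dist u a ≤ G.dist u r)
    (hmb : ∀ r ∈ R, G.dist u b ≤ G.dist u r) : a = b := by
  have hd : G.dist u a = G.dist u b := le_antisymm (hma b hb) (hmb a ha)
  have hglue : G.dist u a + G.dist a b = G.dist u b := by
    apply tree_glue hT
    intro c hc1 hc2
    have hcR : c ∈ R := hconv a ha b hb c hc2
    have := hma c hcR
    have h0 : G.dist c a = 0 := by omega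
    exact ((hT.isConnected.dist_eq_zero_iff).mp h0)
  have : G.dist a b = 0 := by omega
  exact (hT.isConnected.dist_eq_zero_iff).mp this


/-- the parsimonious extension of a labelling of `T(Y)` to `T` has exactly
the same number of mutation edges. -/
theorem parsimonious_extension_mutCount
    {X Y S : Type} (T : PTree X) (incl : Y → X) (hincl : Function.Injective incl)
    (TY : PTree Y) (φ : TY.V → T.V)
    (hinj : Function.Injective φ)
    (hrange : Set.range φ =
      {v | ∃ y1 y2 : Y, v ∈ T.pathSet (T.leaf (incl y1)) (T.leaf (incl y2))})
    (hleaf : ∀ y, φ (TY.leaf y) = T.leaf (incl y))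
    (hadj : ∀ u w, TY.G.Adj u w ↔ T.G.Adj (φ u) (φ w))
    (hY : Nonempty Y)
    (fbar : TY.V → S) (ftil : T.V → S)
    (hagree : ∀ w, ftil (φ w) = fbar w)
    (hclosest : ∀ v : T.V, ∃ w : TY.V,
      (∀ w', T.G.dist v (φ w) ≤ T.G.dist v (φ w')) ∧ ftil v = fbar w) :
    T.mutCount ftil = TY.mutCount fbar := by
  classical
  have hT := T.isTree
  set R : Set T.V := Set.range φ with hRdef
  have hmemR : ∀ v : T.V, v ∈ R ↔ ∃ w, φ w = v := fun v => Iff.rfl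
  -- convexity of R
  have hconv : ∀ a ∈ R, ∀ b ∈ R, ∀ c, T.G.dist a c + T.G.dist c b = T.G.dist a b → c ∈ R := by
    intro a ha b hb c hc
    rw [hrange] at ha hb ⊢
    obtain ⟨y1, y2, ha⟩ := ha
    obtain ⟨y3, y4, hb⟩ := hb
    simp only [PTree.pathSet, Set.mem_setOf_eq] at ha hb ⊢
    rcases tree_c1 hT ha hc with h1 | h1
    · have h1' : T.G.dist b c + T.G.dist c (T.leaf (incl y1)) =
          T.G.dist b (T.leaf (incl y1)) := by
        have c1 : T.G.dist b c = T.G.dist c b := SimpleGraph.dist_comm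
        have c2 : T.G.dist c (T.leaf (incl y1)) = T.G.dist (T.leaf (incl y1)) c :=
          SimpleGraph.dist_comm
        have c3 : T.G.dist b (T.leaf (incl y1)) = T.G.dist (T.leaf (incl y1)) b :=
          SimpleGraph.dist_comm
        omega
      rcases tree_c1 hT hb h1' with h2 | h2
      · exact ⟨y3, y1, h2⟩
      · exact ⟨y4, y1, h2⟩
    · have h1' : T.G.dist b c + T.G.dist c (T.leaf (incl y2)) =
          T.G.dist b (T.leaf (incl y2)) := by
        have c1 : T.G.dist b c = T.G.dist c b := SimpleGraph.dist_comm
        have c2 : T.G.dist c (T.leaf (incl y2)) = T.G.dist (T.leaf (incl y2)) c :=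
          SimpleGraph.dist_comm
        have c3 : T.G.dist b (T.leaf (incl y2)) = T.G.dist (T.leaf (incl y2)) b :=
          SimpleGraph.dist_comm
        omega
      rcases tree_c1 hT hb h1' with h2 | h2
      · exact ⟨y3, y2, h2⟩
      · exact ⟨y4, y2, h2⟩
  have hconn := hT.isConnected
  -- edge lemma
  have hedge : ∀ u v : T.V, T.G.Adj u v → u ∉ R → ftil u = ftil v := by
    intro u v huv huR
    obtain ⟨wu, hwu_min, hwu_val⟩ := hclosest u
    obtain ⟨wv, hwv_min, hwv_val⟩ := hclosest v
    have haR : φ wu ∈ R := ⟨wu, rfl⟩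
    have hbR : φ wv ∈ R := ⟨wv, rfl⟩
    have huv1 : T.G.dist u v = 1 := SimpleGraph.dist_eq_one_iff_adj.mpr huv
    have hdu_pos : 1 ≤ T.G.dist u (φ wu) := by
      rcases Nat.eq_zero_or_pos (T.G.dist u (φ wu)) with h | h
      · exact absurd ⟨wu, (hconn.dist_eq_zero_iff.mp h).symm⟩ huR
      · exact h
    have hminu : ∀ r ∈ R, T.G.dist u (φ wu) ≤ T.G.dist u r := by
      rintro r ⟨w', rfl⟩; exact hwu_min w'
    have hminv : ∀ r ∈ R, T.G.dist v (φ wv) ≤ T.G.dist v r := by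
      rintro r ⟨w', rfl⟩; exact hwv_min w'
    by_cases hvR : v ∈ R
    · obtain ⟨z, hz⟩ := hvR
      have h0 : T.G.dist v (φ wv) = 0 := by
        have h := hwv_min z
        rw [hz, SimpleGraph.dist_self] at h
        omega
      have hbv : φ wv = v := (hconn.dist_eq_zero_iff.mp h0).symm
      have hdu1 : T.G.dist u (φ wu) = 1 := by
        have := hwu_min z
        rw [hz, huv1] at this
        omega
      have hv_min : ∀ r ∈ R, T.G.dist u v ≤ T.G.dist u r := by
        intro r hr
        rw [huv1, ← hdu1]
        exact hminu r hr
      have : φ wu = v :=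
        tree_proj_unique hT hconv haR (hbv ▸ hbR) hminu hv_min
      rw [hwu_val, hwv_val, hinj (this.trans hbv.symm)]
    · -- both u, v outside R
      set a := φ wu
      set b := φ wv
      set du := T.G.dist u a with hdu
      set dv := T.G.dist v b with hdv
      have hvu1 : T.G.dist v u = 1 := by
        rw [SimpleGraph.dist_comm]; exact huv1
      have hdv_pos : 1 ≤ dv := by
        rcases Nat.eq_zero_or_pos dv with h | h
        · exact absurd ⟨wv, (hconn.dist_eq_zero_iff.mp h).symm⟩ hvR
        · exact h
      -- distances from edge endpoints to b
      have hne_b : T.G.dist u b ≠ T.G.dist v b := by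
        have := tree_adj_dist_ne hT huv b
        have c1 : T.G.dist b u = T.G.dist u b := SimpleGraph.dist_comm
        have c2 : T.G.dist b v = T.G.dist v b := SimpleGraph.dist_comm
        omega
      have htri_ub : T.G.dist u b ≤ T.G.dist u v + T.G.dist v b := hconn.dist_triangle
      have htri_vb : T.G.dist v b ≤ T.G.dist v u + T.G.dist u b := hconn.dist_triangle
      have hne_a : T.G.dist u a ≠ T.G.dist v a := by
        have := tree_adj_dist_ne hT huv a
        have c1 : T.G.dist a u = T.G.dist u a := SimpleGraph.dist_comm
        have c2 : T.G.dist a v = T.G.dist v a := SimpleGraph.dist_comm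
        omega
      have htri_va : T.G.dist v a ≤ T.G.dist v u + T.G.dist u a := hconn.dist_triangle
      have htri_ua : T.G.dist u a ≤ T.G.dist u v + T.G.dist v a := hconn.dist_triangle
      have hminva : dv ≤ T.G.dist v a := hminv a haR
      have hminub : du ≤ T.G.dist u b := hminu b hbR
      rcases lt_or_gt_of_ne hne_b with hb_lt | hb_lt
      · -- dist u b < dist v b, so dist u b = dv - 1 and b is a minimizer for u
        have h1 : T.G.dist u b + 1 = T.G.dist v b := by omega
        have h2 : T.G.dist v b ≤ dv := by
          have := hminv b hbR
          omega
        have h3 : du = T.G.dist u b := by omega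
        have hb_min_u : ∀ r ∈ R, T.G.dist u b ≤ T.G.dist u r := by
          intro r hr; rw [← h3]; exact hminu r hr
        have hab : a = b := tree_proj_unique hT hconv haR hbR hminu hb_min_u
        rw [hwu_val, hwv_val, hinj hab]
      · rcases lt_or_gt_of_ne hne_a with ha_lt | ha_lt
        · -- bad case: dist v a = du + 1, dist u b = dv + 1
          exfalso
          have hva : T.G.dist v a = du + 1 := by omega
          have hub : T.G.dist u b = dv + 1 := by omega
          -- v is between a and b
          have hvab : T.G.dist a v + T.G.dist v b = T.G.dist a b := by
            apply tree_glue hT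
            intro c hc1 hc2
            by_contra hcv
            -- c between v and a
            have hc1' : T.G.dist v c + T.G.dist c a = T.G.dist v a := by
              have d1 : T.G.dist a c = T.G.dist c a := SimpleGraph.dist_comm
              have d2 : T.G.dist c v = T.G.dist v c := SimpleGraph.dist_comm
              have d3 : T.G.dist a v = T.G.dist v a := SimpleGraph.dist_comm
              omega
            have hu_between : T.G.dist v u + T.G.dist u a = T.G.dist v a := by
              omega
            have hc_pos : 1 ≤ T.G.dist v c := by
              rcases Nat.eq_zero_or_pos (T.G.dist v c) with h | h
              · exact absurd (hconn.dist_eq_zero_iff.mp h).symm hcv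
              · exact h
            have hstep : T.G.dist v u + T.G.dist u c = T.G.dist v c := by
              apply tree_between_trans hT hu_between hc1'
              omega
            have htri_final : T.G.dist u b ≤ T.G.dist u c + T.G.dist c b :=
              hconn.dist_triangle
            omega
          -- u is between a and b, so u ∈ R: contradiction
          apply huR
          apply hconv a haR b hbR u
          have d1 : T.G.dist a u = T.G.dist u a := SimpleGraph.dist_comm
          have d2 : T.G.dist a v = T.G.dist v a := SimpleGraph.dist_comm
          omega
        · -- dist v a < dist u a: a is a minimizer for v
          have h1 : T.G.dist v a + 1 = du := by omega
          have h2 : dv = T.G.dist v a := by omega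
          have ha_min_v : ∀ r ∈ R, T.G.dist v a ≤ T.G.dist v r := by
            intro r hr; rw [← h2]; exact hminv r hr
          have hab : a = b := tree_proj_unique hT hconv haR hbR ha_min_v hminv
          rw [hwu_val, hwv_val, hinj hab]
  -- the set of mutation edges of T is the φ-image of those of TY
  have hmut : {e ∈ T.G.edgeSet | ¬ (Sym2.map ftil e).IsDiag} =
      Sym2.map φ '' {e ∈ TY.G.edgeSet | ¬ (Sym2.map fbar e).IsDiag} := by
    apply Set.eq_of_subset_of_subset
    · intro e he
      obtain ⟨he1, he2⟩ := he
      revert he1 he2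
      induction e using Sym2.ind with
      | _ u v =>
        intro he1 he2
        rw [SimpleGraph.mem_edgeSet] at he1
        rw [Sym2.map_pair_eq, Sym2.mk_isDiag_iff] at he2
        have huR : u ∈ R := by
          by_contra h
          exact he2 (hedge u v he1 h)
        have hvR : v ∈ R := by
          by_contra h
          exact he2 (hedge v u he1.symm h).symm
        obtain ⟨u', rfl⟩ := huR
        obtain ⟨v', rfl⟩ := hvR
        refine ⟨s(u', v'), ⟨?_, ?_⟩, ?_⟩
        · rw [SimpleGraph.mem_edgeSet]
          exact (hadj u' v').mpr he1
        · rw [Sym2.map_pair_eq, Sym2.mk_isDiag_iff]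
          intro h
          apply he2
          rw [hagree u', hagree v', h]
        · rw [Sym2.map_pair_eq]
    · rintro e ⟨e', he', rfl⟩
      obtain ⟨he1, he2⟩ := he'
      revert he1 he2
      induction e' using Sym2.ind with
      | _ u v =>
        intro he1 he2
        rw [SimpleGraph.mem_edgeSet] at he1
        rw [Sym2.map_pair_eq, Sym2.mk_isDiag_iff] at he2
        constructor
        · rw [Sym2.map_pair_eq, SimpleGraph.mem_edgeSet]
          exact (hadj u v).mp he1
        · rw [Sym2.map_pair_eq, Sym2.map_pair_eq, Sym2.mk_isDiag_iff, hagree, hagree]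
          exact he2
  show {e ∈ T.G.edgeSet | ¬ (Sym2.map ftil e).IsDiag}.ncard =
      {e ∈ TY.G.edgeSet | ¬ (Sym2.map fbar e).IsDiag}.ncard
  rw [hmut, Set.ncard_image_of_injective _ (Sym2.map.injective hinj)]
end

section
/- Let T₁ and T₂ be trees on the same leaf set X and let Y ⊆ X. Then for every t ≥ 2 (including t = ∞), the t-state maximum parsimony distance satisfies d_MP^t(T₁(Y), T₂(Y)) ≤ d_MP^t(T₁, T₂). -/
open SimpleGraph

variable {X Y S : Type}

set_option linter.unusedSectionVars false
namespace MPAux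
open SimpleGraph.Walk

variable {V : Type} [DecidableEq V] {G : SimpleGraph V}

lemma isPath_append {u v w : V} {p : G.Walk u v} {q : G.Walk v w}
    (hp : p.IsPath) (hq : q.IsPath)
    (h : ∀ x, x ∈ p.support → x ∈ q.support → x = v) : (p.append q).IsPath := by
  rw [Walk.isPath_def, Walk.support_append]
  have hq' := hq.support_nodup
  rw [q.support_eq_cons] at hq'
  refine List.Nodup.append hp.support_nodup (List.nodup_cons.mp hq').2 ?_
  intro a hap haq
  have haq' : a ∈ q.support := by
    rw [q.support_eq_cons]; exact List.mem_cons_of_mem _ haq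
  have := h a hap haq'
  subst this
  exact (List.nodup_cons.mp hq').1 haq

variable (hT : G.IsTree)

/-- canonical shortest path -/
noncomputable def sp (u v : V) : G.Walk u v :=
  (hT.isConnected.exists_walk_length_eq_dist u v).choose

lemma sp_length (u v : V) : (sp hT u v).length = G.dist u v :=
  (hT.isConnected.exists_walk_length_eq_dist u v).choose_spec

lemma sp_isPath (u v : V) : (sp hT u v).IsPath :=
  Walk.isPath_of_length_eq_dist _ (sp_length hT u v)

lemma path_eq_sp {u v : V} (p : G.Walk u v) (hp : p.IsPath) : p = sp hT u v := by
  have := hT.IsAcyclic.path_unique ⟨p, hp⟩ ⟨sp hT u v, sp_isPath hT u v⟩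
  exact congrArg Subtype.val this

lemma sp_support_subset {u v : V} (W : G.Walk u v) :
    (sp hT u v).support ⊆ W.support := by
  rw [← path_eq_sp hT W.bypass W.bypass_isPath]
  exact W.support_bypass_subset

lemma mem_sp_support_iff {u v w : V} :
    w ∈ (sp hT u v).support ↔ G.dist u w + G.dist w v = G.dist u v := by
  constructor
  · intro hw
    have hts := Walk.take_spec (sp hT u v) hw
    have hlen : ((sp hT u v).takeUntil w hw).length
        + ((sp hT u v).dropUntil w hw).length = G.dist u v := by
      rw [← Walk.length_append, hts, sp_length]
    have h1 := SimpleGraph.dist_le ((sp hT u v).takeUntil w hw)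
    have h2 := SimpleGraph.dist_le ((sp hT u v).dropUntil w hw)
    have h3 := hT.isConnected.dist_triangle (u := u) (v := w) (w := v)
    omega
  · intro hw
    have hW : ((sp hT u w).append (sp hT w v)).length = G.dist u v := by
      rw [Walk.length_append, sp_length, sp_length, hw]
    have hP : ((sp hT u w).append (sp hT w v)).IsPath :=
      Walk.isPath_of_length_eq_dist _ hW
    have := path_eq_sp hT _ hP
    rw [← this, Walk.mem_support_append_iff]
    exact Or.inl (Walk.end_mem_support _)

/-- interval union along any by-point -/
lemma dist_split (hT : G.IsTree) {x y z p : V} (hp : G.dist x p + G.dist p z = G.dist x z) :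
    G.dist x p + G.dist p y = G.dist x y ∨ G.dist y p + G.dist p z = G.dist y z := by
  have hmem : p ∈ (sp hT x z).support := (mem_sp_support_iff hT).2 hp
  have hsub := sp_support_subset hT ((sp hT x y).append (sp hT y z))
  have := hsub hmem
  rw [Walk.mem_support_append_iff] at this
  rcases this with h | h
  · exact Or.inl ((mem_sp_support_iff hT).1 h)
  · exact Or.inr ((mem_sp_support_iff hT).1 h)

lemma dist_sub (hT : G.IsTree) {c d q p : V} (hq : G.dist c q + G.dist q d = G.dist c d)
    (hp : G.dist c p + G.dist p q = G.dist c q) :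
    G.dist c p + G.dist p d = G.dist c d := by
  have h1 := hT.isConnected.dist_triangle (u := p) (v := q) (w := d)
  have h2 := hT.isConnected.dist_triangle (u := c) (v := p) (w := d)
  omega

lemma median (hT : G.IsTree) (x y z : V) :
    ∃ m : V, (G.dist x m + G.dist m y = G.dist x y)
      ∧ (G.dist y m + G.dist m z = G.dist y z)
      ∧ (G.dist x m + G.dist m z = G.dist x z) := by
  classical
  set s : Finset V := ((sp hT x y).support.toFinset ∩ (sp hT y z).support.toFinset) with hs
  have hsne : s.Nonempty := ⟨y, by
    simp [hs, List.mem_toFinset, Walk.end_mem_support, Walk.start_mem_support]⟩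
  obtain ⟨m, hms, hmin⟩ := Finset.exists_min_image s (G.dist x) hsne
  have hm1 : m ∈ (sp hT x y).support := by
    rw [hs, Finset.mem_inter, List.mem_toFinset, List.mem_toFinset] at hms
    exact hms.1
  have hm2 : m ∈ (sp hT y z).support := by
    rw [hs, Finset.mem_inter, List.mem_toFinset, List.mem_toFinset] at hms
    exact hms.2
  -- A := sp x m , B := sp m z
  have hAsub : (sp hT x m).support ⊆ (sp hT x y).support := by
    intro a ha
    exact (Walk.support_takeUntil_subset _ hm1)
      (sp_support_subset hT ((sp hT x y).takeUntil m hm1) ha)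
  have hBsub : (sp hT m z).support ⊆ (sp hT y z).support := by
    intro a ha
    exact (Walk.support_dropUntil_subset _ hm2)
      (sp_support_subset hT ((sp hT y z).dropUntil m hm2) ha)
  have hpath : ((sp hT x m).append (sp hT m z)).IsPath := by
    refine isPath_append (sp_isPath hT x m) (sp_isPath hT m z) ?_
    intro a hA hB
    have has : a ∈ s := by
      rw [hs, Finset.mem_inter, List.mem_toFinset, List.mem_toFinset]
      exact ⟨hAsub hA, hBsub hB⟩
    have h1 := (mem_sp_support_iff hT).1 hA
    have h2 := hmin a has
    have : G.dist a m = 0 := by omega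
    exact ((hT.isConnected.dist_eq_zero_iff).1 this)
  have hWsp := path_eq_sp hT _ hpath
  have hmem : m ∈ (sp hT x z).support := by
    rw [← hWsp, Walk.mem_support_append_iff]
    exact Or.inl (Walk.end_mem_support _)
  exact ⟨m, (mem_sp_support_iff hT).1 hm1, (mem_sp_support_iff hT).1 hm2,
    (mem_sp_support_iff hT).1 hmem⟩



-- Section B : gates onto a convex set in a tree
section Gates

variable {V : Type} [DecidableEq V] [Fintype V] {G : SimpleGraph V}

def Convex' (G : SimpleGraph V) (R : Set V) : Prop :=
  ∀ p ∈ R, ∀ q ∈ R, ∀ w : V, G.dist p w + G.dist w q = G.dist p q → w ∈ R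

lemma exists_gate (hT : G.IsTree) {R : Set V} (hconv : Convex' G R) (hne : R.Nonempty)
    (v : V) :
    ∃ m ∈ R, ∀ p ∈ R, G.dist v m + G.dist m p = G.dist v p := by
  obtain ⟨m, hmR, hmin⟩ := Set.exists_min_image R (G.dist v) (Set.toFinite R) hne
  refine ⟨m, hmR, fun p hp => ?_⟩
  obtain ⟨μ, h1, h2, h3⟩ := median hT v m p
  have hμR : μ ∈ R := hconv m hmR p hp μ h2
  have h4 := hmin μ hμR
  have h5 : G.dist μ m = 0 := by omega
  have h6 : μ = m := (hT.isConnected.dist_eq_zero_iff).1 h5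
  subst h6
  omega

noncomputable def gate (hT : G.IsTree) {R : Set V} (hconv : Convex' G R)
    (hne : R.Nonempty) (v : V) : V := (exists_gate hT hconv hne v).choose

lemma gate_mem (hT : G.IsTree) {R : Set V} (hconv : Convex' G R) (hne : R.Nonempty)
    (v : V) : gate hT hconv hne v ∈ R :=
  (exists_gate hT hconv hne v).choose_spec.1

lemma gate_dist (hT : G.IsTree) {R : Set V} (hconv : Convex' G R) (hne : R.Nonempty)
    (v : V) : ∀ p ∈ R, G.dist v (gate hT hconv hne v) +
      G.dist (gate hT hconv hne v) p = G.dist v p :=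
  (exists_gate hT hconv hne v).choose_spec.2

lemma gate_eq_self (hT : G.IsTree) {R : Set V} (hconv : Convex' G R) (hne : R.Nonempty)
    {v : V} (hv : v ∈ R) : gate hT hconv hne v = v := by
  have := gate_dist hT hconv hne v v hv
  have h0 : G.dist v v = 0 := SimpleGraph.dist_self
  have h1 : G.dist v (gate hT hconv hne v) = 0 := by omega
  exact ((hT.isConnected.dist_eq_zero_iff).1 h1).symm

lemma gate_adj (hT : G.IsTree) {R : Set V} (hconv : Convex' G R) (hne : R.Nonempty)
    {v w : V} (hv : v ∉ R) (hadj : G.Adj v w) :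
    gate hT hconv hne v = gate hT hconv hne w := by
  classical
  set m := gate hT hconv hne v with hmdef
  set m' := gate hT hconv hne w with hm'def
  by_contra hne'
  have hmR : m ∈ R := gate_mem hT hconv hne v
  have hm'R : m' ∈ R := gate_mem hT hconv hne w
  have h1 : G.dist v m + G.dist m m' = G.dist v m' :=
    gate_dist hT hconv hne v m' hm'R
  have h2 : G.dist w m' + G.dist m' m = G.dist w m :=
    gate_dist hT hconv hne w m hmR
  have hvw : G.dist v w = 1 := SimpleGraph.dist_eq_one_iff_adj.2 hadj
  have hwv : G.dist w v = 1 := by rw [SimpleGraph.dist_comm]; exact hvw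
  have tri1 : G.dist v m' ≤ G.dist v w + G.dist w m' := hT.isConnected.dist_triangle
  have tri2 : G.dist w m ≤ G.dist w v + G.dist v m := hT.isConnected.dist_triangle
  have hcomm : G.dist m m' = G.dist m' m := SimpleGraph.dist_comm
  have hd1 : G.dist m m' ≠ 0 := fun h0 =>
    hne' ((hT.isConnected.dist_eq_zero_iff).1 h0)
  have hdv : G.dist v m ≠ 0 := fun h0 =>
    hv (((hT.isConnected.dist_eq_zero_iff).1 h0) ▸ hmR)
  have hdd : G.dist m m' = 1 := by omega
  have heq : G.dist v m = G.dist w m' := by omega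
  set d := G.dist v m with hd
  have hvm' : G.dist v m' = d + 1 := by omega
  have hwm : G.dist w m = d + 1 := by omega
  have hwR : w ∉ R := by
    intro hw
    have h := gate_eq_self hT hconv hne hw
    rw [← hm'def] at h
    have : G.dist w m' = 0 := by rw [h]; exact SimpleGraph.dist_self
    omega
  have hadjm : G.Adj m m' := SimpleGraph.dist_eq_one_iff_adj.1 hdd
  have hvns : v ∉ (sp hT w m').support := by
    intro hmem
    have := (mem_sp_support_iff hT).1 hmem
    omega
  have hP1 : (Walk.cons hadj (sp hT w m')).IsPath :=
    (sp_isPath hT w m').cons hvns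
  have hP2 : ((sp hT v m).append (Walk.cons hadjm Walk.nil)).IsPath := by
    refine isPath_append (sp_isPath hT v m) ?_ ?_
    · simp [Walk.cons_isPath_iff]
      intro h; exact hne' (by rw [h])
    · intro x hx hx'
      simp [Walk.support_cons, Walk.support_nil] at hx'
      rcases hx' with rfl | rfl
      · rfl
      · exfalso
        have := (mem_sp_support_iff hT).1 hx
        omega
  have hPeq : Walk.cons hadj (sp hT w m') = (sp hT v m).append (Walk.cons hadjm Walk.nil) := by
    rw [path_eq_sp hT _ hP1, path_eq_sp hT _ hP2]
  have hw1 : w ∈ (Walk.cons hadj (sp hT w m')).support := by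
    rw [Walk.support_cons]
    exact List.mem_cons_of_mem _ (Walk.start_mem_support _)
  rw [hPeq, Walk.mem_support_append_iff] at hw1
  rcases hw1 with h | h
  · have := (mem_sp_support_iff hT).1 h
    omega
  · simp [Walk.support_cons, Walk.support_nil] at h
    rcases h with h' | h'
    · have : G.dist w m = 0 := by rw [h']; exact SimpleGraph.dist_self
      omega
    · exact hwR (h' ▸ hm'R)

end Gates

-- Section C : PTree basics
section PTreeAux

variable {X Y : Type}

lemma ptree_nonemptyV (T : PTree X) : Nonempty T.V := T.isTree.isConnected.nonempty

lemma ptree_nonempty_index (T : PTree X) : Nonempty X := by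
  classical
  have hV : Nonempty T.V := ptree_nonemptyV T
  have hcard : T.G.edgeFinset.card + 1 = Fintype.card T.V := T.isTree.card_edgeFinset
  by_contra hX
  have hdeg : ∀ v : T.V, 2 ≤ T.G.degree v := by
    intro v
    by_contra hd
    push_neg at hd
    obtain ⟨x, _⟩ := T.leaf_surj v (by omega)
    exact hX ⟨x⟩
  have hsum : ∑ v : T.V, T.G.degree v = 2 * T.G.edgeFinset.card :=
    SimpleGraph.sum_degrees_eq_twice_card_edges T.G
  have hge : 2 * Fintype.card T.V ≤ ∑ v : T.V, T.G.degree v := by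
    calc 2 * Fintype.card T.V = ∑ _v : T.V, 2 := by
          rw [Finset.sum_const, smul_eq_mul, Finset.card_univ, mul_comm]
      _ ≤ ∑ v : T.V, T.G.degree v := Finset.sum_le_sum (fun v _ => hdeg v)
  have hpos : 1 ≤ Fintype.card T.V := Fintype.card_pos
  omega

lemma ptree_exists_ext (T : PTree X) (f : X → ℕ) :
    ∃ g : T.V → ℕ, ∀ x, g (T.leaf x) = f x := by
  classical
  refine ⟨fun v => if h : ∃ x, T.leaf x = v then f h.choose else 0, fun x => ?_⟩
  have hx : ∃ x', T.leaf x' = T.leaf x := ⟨x, rfl⟩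
  show (if h : ∃ x', T.leaf x' = T.leaf x then f h.choose else 0) = f x
  rw [dif_pos hx]
  exact congrArg f (T.leaf_inj hx.choose_spec)

lemma ptree_lscore_le {S : Type} (T : PTree X) (f : X → S) (g : T.V → S)
    (hg : ∀ x, g (T.leaf x) = f x) : T.lscore f ≤ T.mutCount g :=
  Nat.sInf_le ⟨g, hg, rfl⟩

lemma ptree_exists_opt (T : PTree X) (f : X → ℕ) :
    ∃ g : T.V → ℕ, (∀ x, g (T.leaf x) = f x) ∧ T.mutCount g = T.lscore f := by
  have hne : {n | ∃ g : T.V → ℕ, (∀ x, g (T.leaf x) = f x) ∧ T.mutCount g = n}.Nonempty := by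
    obtain ⟨g, hg⟩ := ptree_exists_ext T f
    exact ⟨T.mutCount g, g, hg, rfl⟩
  obtain ⟨g, hg, hm⟩ := Nat.sInf_mem hne
  exact ⟨g, hg, hm⟩

lemma ptree_mutCount_le_card {S : Type} (T : PTree X) (g : T.V → S) :
    T.mutCount g ≤ T.G.edgeFinset.card := by
  classical
  have h1 : T.mutCount g ≤ T.G.edgeSet.ncard :=
    Set.ncard_le_ncard (Set.sep_subset _ _) (Set.toFinite _)
  rwa [← SimpleGraph.coe_edgeFinset, Set.ncard_coe_finset] at h1

lemma ptree_lscore_le_bound (T : PTree X) (f : X → ℕ) :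
    T.lscore f ≤ T.G.edgeFinset.card := by
  obtain ⟨g, hg, hm⟩ := ptree_exists_opt T f
  rw [← hm]
  exact ptree_mutCount_le_card T g

lemma mutCount_le_of_map {S : Type} (T : PTree X) (T' : PTree Y)
    (g : T.V → S) (g' : T'.V → S) (φ : T'.V → T.V) (hφ : Function.Injective φ)
    (hadj : ∀ u w, T'.G.Adj u w → T.G.Adj (φ u) (φ w))
    (hval : ∀ v, g (φ v) = g' v) : T'.mutCount g' ≤ T.mutCount g := by
  classical
  unfold PTree.mutCount
  refine Set.ncard_le_ncard_of_injOn (Sym2.map φ) ?_ ((Sym2.map.injective hφ).injOn) (Set.toFinite _)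
  intro e he
  obtain ⟨he, hd⟩ := he
  induction e using Sym2.ind with
  | _ a b =>
    refine ⟨?_, ?_⟩
    · rw [Sym2.map_pair_eq, SimpleGraph.mem_edgeSet]
      exact hadj a b ((SimpleGraph.mem_edgeSet _).mp he)
    · rw [Sym2.map_pair_eq, Sym2.map_pair_eq, hval, hval]
      rwa [Sym2.map_pair_eq] at hd

end PTreeAux

-- Section D : restriction and extension lemmas
section Main

variable {X Y : Type}

lemma lscore_restrict_le (T : PTree X) (TY : PTree Y) (incl : Y → X)
    (h : IsInducedSubtree T incl TY) (f' : X → ℕ) :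
    TY.lscore (fun y => f' (incl y)) ≤ T.lscore f' := by
  obtain ⟨φ, hφinj, hrange, hleaf, hadj⟩ := h
  obtain ⟨g, hg, hm⟩ := ptree_exists_opt T f'
  rw [← hm]
  refine le_trans (ptree_lscore_le TY _ (fun v => g (φ v)) (fun y => ?_)) ?_
  · show g (φ (TY.leaf y)) = f' (incl y)
    rw [hleaf y]; exact hg (incl y)
  · exact mutCount_le_of_map T TY g _ φ hφinj (fun u w hu => (hadj u w).mp hu) (fun v => rfl)

lemma exists_good_ext (T : PTree X) (TY : PTree Y) (incl : Y → X)
    (h : IsInducedSubtree T incl TY) (f : Y → ℕ) :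
    ∃ f' : X → ℕ, (∀ y, f' (incl y) = f y) ∧ (∀ x, ∃ y, f' x = f y) ∧
      T.lscore f' ≤ TY.lscore f := by
  classical
  obtain ⟨φ, hφinj, hrange, hleaf, hadj⟩ := h
  obtain ⟨g0, hg0, hg0m⟩ := ptree_exists_opt TY f
  obtain ⟨y0⟩ := ptree_nonempty_index TY
  -- collapse the states of g0 into the image of f
  set σ : ℕ → ℕ := fun s => if ∃ y, s = f y then s else f y0 with hσdef
  set g : TY.V → ℕ := fun v => σ (g0 v) with hgdef
  have hσval : ∀ s, ∃ y, σ s = f y := by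
    intro s
    by_cases hc : ∃ y, s = f y
    · obtain ⟨y, hy⟩ := hc
      exact ⟨y, by rw [hσdef]; simp only [hy]; rw [if_pos ⟨y, rfl⟩]⟩
    · exact ⟨y0, by rw [hσdef]; simp only; rw [if_neg hc]⟩
  have hσfix : ∀ y, σ (f y) = f y := by
    intro y
    rw [hσdef]; simp only; rw [if_pos ⟨y, rfl⟩]
  have hgval : ∀ v, ∃ y, g v = f y := fun v => hσval (g0 v)
  have hgext : ∀ y, g (TY.leaf y) = f y := by
    intro y; rw [hgdef]; simp only [hg0 y]; exact hσfix y
  have hgmut : TY.mutCount g ≤ TY.mutCount g0 := by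
    unfold PTree.mutCount
    refine Set.ncard_le_ncard ?_ (Set.toFinite _)
    rintro e ⟨he, hd⟩
    refine ⟨he, fun hdiag => hd ?_⟩
    induction e using Sym2.ind with
    | _ a b =>
      rw [Sym2.map_pair_eq, Sym2.mk_isDiag_iff] at hdiag ⊢
      rw [hgdef]; simp only [hdiag]
  -- the subtree vertex set
  have hRconv : Convex' T.G (Set.range φ) := by
    intro p hp q hq w hw
    rw [hrange] at hp hq ⊢
    obtain ⟨a, b, hpab⟩ := hp
    obtain ⟨c, d, hqcd⟩ := hq
    simp only [PTree.pathSet, Set.mem_setOf_eq] at hpab hqcd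
    have hT := T.isTree
    rcases dist_split hT (y := T.leaf (incl c)) hw with h1 | h1
    · rcases dist_split hT (y := T.leaf (incl a)) h1 with h2 | h2
      · -- w between p and leaf a ; use p ∈ path(a,b)
        refine ⟨a, b, ?_⟩
        simp only [PTree.pathSet, Set.mem_setOf_eq]
        have hc1 : T.G.dist (T.leaf (incl a)) w + T.G.dist w p
            = T.G.dist (T.leaf (incl a)) p := by
          have e1 : T.G.dist p w = T.G.dist w p := SimpleGraph.dist_comm
          have e2 : T.G.dist w (T.leaf (incl a)) = T.G.dist (T.leaf (incl a)) w :=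
            SimpleGraph.dist_comm
          have e3 : T.G.dist p (T.leaf (incl a)) = T.G.dist (T.leaf (incl a)) p :=
            SimpleGraph.dist_comm
          omega
        exact dist_sub hT hpab hc1
      · -- w between leaf a and leaf c
        refine ⟨a, c, ?_⟩
        simp only [PTree.pathSet, Set.mem_setOf_eq]
        exact h2
    · -- w between leaf c and q ; use q ∈ path(c,d)
      refine ⟨c, d, ?_⟩
      simp only [PTree.pathSet, Set.mem_setOf_eq]
      exact dist_sub hT hqcd h1
  have hRne : (Set.range φ).Nonempty := ⟨φ (TY.leaf y0), ⟨TY.leaf y0, rfl⟩⟩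
  have hTYne : Nonempty TY.V := ptree_nonemptyV TY
  set ψ : T.V → TY.V := fun v =>
    if h : ∃ u, φ u = v then h.choose else Classical.arbitrary TY.V with hψdef
  have hψ : ∀ v, v ∈ Set.range φ → φ (ψ v) = v := by
    intro v hv
    obtain ⟨u, hu⟩ := hv
    have hex : ∃ u, φ u = v := ⟨u, hu⟩
    rw [hψdef]; simp only; rw [dif_pos hex]
    exact hex.choose_spec
  have hψφ : ∀ u, ψ (φ u) = u := fun u => hφinj (hψ (φ u) ⟨u, rfl⟩)
  set htot : T.V → ℕ := fun v => g (ψ (gate T.isTree hRconv hRne v)) with hhdef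
  have hfix : ∀ v, v ∈ Set.range φ → htot v = g (ψ v) := by
    intro v hv
    rw [hhdef]; simp only
    rw [gate_eq_self T.isTree hRconv hRne hv]
  -- the character
  refine ⟨fun x => htot (T.leaf x), fun y => ?_, fun x => ?_, ?_⟩
  · have hmem : T.leaf (incl y) ∈ Set.range φ := ⟨TY.leaf y, hleaf y⟩
    show htot (T.leaf (incl y)) = f y
    rw [hfix _ hmem, ← hleaf y, hψφ, hgext]
  · exact hgval _
  · -- score bound
    refine le_trans (ptree_lscore_le T _ htot (fun x => rfl)) ?_
    rw [← hg0m]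
    refine le_trans ?_ hgmut
    -- mutCount htot ≤ mutCount g via ψ
    have hmutR : ∀ a b : T.V, T.G.Adj a b → htot a ≠ htot b →
        a ∈ Set.range φ ∧ b ∈ Set.range φ := by
      intro a b hab hne
      have hg' : gate T.isTree hRconv hRne a ≠ gate T.isTree hRconv hRne b := by
        intro hgg
        exact hne (by rw [hhdef]; simp only [hgg])
      constructor
      · by_contra hna
        exact hg' (gate_adj T.isTree hRconv hRne hna hab)
      · by_contra hnb
        exact hg' (gate_adj T.isTree hRconv hRne hnb hab.symm).symm
    unfold PTree.mutCount
    have hmaps : ∀ e ∈ {e ∈ T.G.edgeSet | ¬(Sym2.map htot e).IsDiag},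
        Sym2.map ψ e ∈ {e ∈ TY.G.edgeSet | ¬(Sym2.map g e).IsDiag} ∧
          Sym2.map φ (Sym2.map ψ e) = e := by
      rintro e ⟨he, hd⟩
      induction e using Sym2.ind with
      | _ a b =>
        have hab : T.G.Adj a b := (SimpleGraph.mem_edgeSet _).mp he
        rw [Sym2.map_pair_eq, Sym2.mk_isDiag_iff] at hd
        obtain ⟨haR, hbR⟩ := hmutR a b hab hd
        have hea : htot a = g (ψ a) := hfix a haR
        have heb : htot b = g (ψ b) := hfix b hbR
        refine ⟨⟨?_, ?_⟩, ?_⟩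
        · rw [Sym2.map_pair_eq, SimpleGraph.mem_edgeSet]
          refine (hadj _ _).mpr ?_
          rwa [hψ a haR, hψ b hbR]
        · rw [Sym2.map_pair_eq, Sym2.map_pair_eq, Sym2.mk_isDiag_iff, ← hea, ← heb]
          exact hd
        · rw [Sym2.map_pair_eq, Sym2.map_pair_eq, hψ a haR, hψ b hbR]
    refine Set.ncard_le_ncard_of_injOn (Sym2.map ψ)
      (fun e he => (hmaps e he).1) ?_ (Set.toFinite _)
    intro e1 h1 e2 h2 heq
    have := (hmaps e1 h1).2
    rw [← this, heq, (hmaps e2 h2).2]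

end Main

lemma key_lemma {X Y : Type} (T1 T2 : PTree X) (incl : Y → X)
    (T1Y T2Y : PTree Y) (h1 : IsInducedSubtree T1 incl T1Y)
    (h2 : IsInducedSubtree T2 incl T2Y) (f : Y → ℕ)
    (hord : T2Y.lscore f ≤ T1Y.lscore f) :
    ∃ f' : X → ℕ, (∀ x, ∃ y, f' x = f y) ∧
      Nat.dist (T1Y.lscore f) (T2Y.lscore f) ≤
        Nat.dist (T1.lscore f') (T2.lscore f') := by
  obtain ⟨f', hext, hval, hle⟩ := exists_good_ext T2 T2Y incl h2 f
  refine ⟨f', hval, ?_⟩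
  have hA : T1Y.lscore f ≤ T1.lscore f' := by
    have h := lscore_restrict_le T1 T1Y incl h1 f'
    have hfe : (fun y => f' (incl y)) = f := funext hext
    rwa [hfe] at h
  have hd1 : Nat.dist (T1Y.lscore f) (T2Y.lscore f) =
      T1Y.lscore f - T2Y.lscore f + (T2Y.lscore f - T1Y.lscore f) := rfl
  have hd2 : Nat.dist (T1.lscore f') (T2.lscore f') =
      T1.lscore f' - T2.lscore f' + (T2.lscore f' - T1.lscore f') := rfl
  omega


end MPAux

/-- for every `t ≥ 2` (including `t = ∞ = ⊤`),
`d_MP^t(T₁(Y), T₂(Y)) ≤ d_MP^t(T₁, T₂)`. -/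
theorem dMP_induced_le
    {X Y : Type} [Fintype X] [Fintype Y]
    (t : ℕ∞) (ht : 2 ≤ t)
    (T1 T2 : PTree X) (incl : Y → X) (hincl : Function.Injective incl)
    (T1Y T2Y : PTree Y)
    (h1 : IsInducedSubtree T1 incl T1Y)
    (h2 : IsInducedSubtree T2 incl T2Y) :
    dMP t T1Y T2Y ≤ dMP t T1 T2 := by
  classical
  have hBdd : BddAbove {n | ∃ f : X → ℕ, ((Finset.univ.image f).card : ℕ∞) ≤ t ∧
      n = Nat.dist (T1.lscore f) (T2.lscore f)} := by
    refine ⟨T1.G.edgeFinset.card + T2.G.edgeFinset.card, ?_⟩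
    rintro n ⟨f, -, rfl⟩
    have b1 := MPAux.ptree_lscore_le_bound T1 f
    have b2 := MPAux.ptree_lscore_le_bound T2 f
    have hd : Nat.dist (T1.lscore f) (T2.lscore f) =
        T1.lscore f - T2.lscore f + (T2.lscore f - T1.lscore f) := rfl
    omega
  unfold dMP
  refine csSup_le ?_ ?_
  · refine ⟨Nat.dist (T1Y.lscore fun _ => 0) (T2Y.lscore fun _ => 0),
      fun _ => 0, ?_, rfl⟩
    have hc : (Finset.univ.image fun (_ : Y) => (0 : ℕ)).card ≤ 1 := by
      refine Finset.card_le_one.mpr ?_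
      intro a ha b hb
      simp only [Finset.mem_image] at ha hb
      obtain ⟨_, _, rfl⟩ := ha
      obtain ⟨_, _, rfl⟩ := hb
      rfl
    calc ((Finset.univ.image fun (_ : Y) => (0 : ℕ)).card : ℕ∞) ≤ 1 := by
          exact_mod_cast hc
      _ ≤ 2 := one_le_two
      _ ≤ t := ht
  · rintro n ⟨f, hf, rfl⟩
    have hcard : ∀ f' : X → ℕ, (∀ x, ∃ y, f' x = f y) →
        ((Finset.univ.image f').card : ℕ∞) ≤ t := by
      intro f' hval
      have hsub : Finset.univ.image f' ⊆ Finset.univ.image f := by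
        intro a ha
        simp only [Finset.mem_image] at ha ⊢
        obtain ⟨x, -, rfl⟩ := ha
        obtain ⟨y, hy⟩ := hval x
        exact ⟨y, Finset.mem_univ y, hy.symm⟩
      exact le_trans (by exact_mod_cast Finset.card_le_card hsub) hf
    rcases le_total (T2Y.lscore f) (T1Y.lscore f) with hord | hord
    · obtain ⟨f', hval, hdle⟩ := MPAux.key_lemma T1 T2 incl T1Y T2Y h1 h2 f hord
      exact le_trans hdle (le_csSup hBdd ⟨f', hcard f' hval, rfl⟩)
    · obtain ⟨f', hval, hdle⟩ := MPAux.key_lemma T2 T1 incl T2Y T1Y h2 h1 f hord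
      rw [Nat.dist_comm] at hdle
      rw [Nat.dist_comm (T2.lscore f') (T1.lscore f')] at hdle
      exact le_trans hdle (le_csSup hBdd ⟨f', hcard f' hval, rfl⟩)
end

section
/- A Fitch extension of a character f on a binary tree T is an optimal extension: the number of mutation edges of T under any Fitch extension equals the parsimony score l_f(T), and moreover this number equals the number of union vertices (vertices u whose two children have disjoint Fitch sets) in the rooted version of T with respect to the Fitch map of f. -/
/-- Rooted binary trees with leaves labelled by `X`. -/
inductive BTree (X : Type) : Type
  | leaf (x : X)
  | node (l r : BTree X)

/-- Rooted binary trees with every vertex labelled by a state in `S`. -/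
inductive LTree (S : Type) : Type
  | leaf (s : S)
  | node (s : S) (l r : LTree S)

def LTree.rootLabel {S : Type} : LTree S → S
  | .leaf s => s
  | .node s _ _ => s

/-- The number of mutation edges (edges whose endpoints get different states). -/
def LTree.mutCount {S : Type} [DecidableEq S] : LTree S → ℕ
  | .leaf _ => 0
  | .node s l r =>
      l.mutCount + r.mutCount + (if l.rootLabel ≠ s then 1 else 0) +
        (if r.rootLabel ≠ s then 1 else 0)

/-- `L` is an extension of the character `f` to the tree `T`: same shape, and the leaf
labels agree with `f`. -/
def IsExtension {X S : Type} (f : X → S) : LTree S → BTree X → Prop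
  | .leaf s, .leaf x => s = f x
  | .node _ l r, .node tl tr => IsExtension f l tl ∧ IsExtension f r tr
  | _, _ => False

/-- The parsimony score `l_f(T)`: minimum number of mutation edges over all
extensions of `f` to `T`. -/
noncomputable def parsimonyScore {X S : Type} [DecidableEq S] (f : X → S)
    (T : BTree X) : ℕ :=
  sInf {n | ∃ L : LTree S, IsExtension f L T ∧ L.mutCount = n}

/-- The Fitch set of the root of `T` (bottom-up phase of Fitch's algorithm). -/
def fitchSet {X S : Type} [DecidableEq S] (f : X → S) : BTree X → Finset S
  | .leaf x => {f x}
  | .node l r =>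
      if fitchSet f l ∩ fitchSet f r = ∅ then fitchSet f l ∪ fitchSet f r
      else fitchSet f l ∩ fitchSet f r

/-- The number of union vertices of `T` with respect to the Fitch map of `f`. -/
def unionCount {X S : Type} [DecidableEq S] (f : X → S) : BTree X → ℕ
  | .leaf _ => 0
  | .node l r =>
      unionCount f l + unionCount f r +
        (if fitchSet f l ∩ fitchSet f r = ∅ then 1 else 0)

/-- All edge conditions of the top-down phase hold: each vertex takes its parent's
state if that state lies in its Fitch set, and otherwise a state of its Fitch set. -/
def FitchTopDown {X S : Type} [DecidableEq S] (f : X → S) : LTree S → BTree X → Prop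
  | .leaf s, .leaf x => s = f x
  | .node s l r, .node tl tr =>
      (if s ∈ fitchSet f tl then l.rootLabel = s else l.rootLabel ∈ fitchSet f tl) ∧
      (if s ∈ fitchSet f tr then r.rootLabel = s else r.rootLabel ∈ fitchSet f tr) ∧
      FitchTopDown f l tl ∧ FitchTopDown f r tr
  | _, _ => False

/-- `L` is a Fitch extension of `f` to `T`. -/
def IsFitchExtension {X S : Type} [DecidableEq S] (f : X → S) (L : LTree S)
    (T : BTree X) : Prop :=
  L.rootLabel ∈ fitchSet f T ∧ FitchTopDown f L T


lemma ftd_ext {X S : Type} [DecidableEq S] (f : X → S) :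
    ∀ (L : LTree S) (T : BTree X), FitchTopDown f L T → IsExtension f L T := by
  intro L
  induction L with
  | leaf s => intro T h; cases T with
    | leaf x => exact h
    | node tl tr => exact h.elim
  | node s l r ihl ihr => intro T h; cases T with
    | leaf x => exact h.elim
    | node tl tr => exact ⟨ihl tl h.2.2.1, ihr tr h.2.2.2⟩

lemma ftd_count {X S : Type} [DecidableEq S] (f : X → S) :
    ∀ (L : LTree S) (T : BTree X), FitchTopDown f L T →
      L.rootLabel ∈ fitchSet f T → L.mutCount = unionCount f T := by
  intro L
  induction L with
  | leaf s =>
    intro T h hm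
    cases T with
    | leaf x => simp [LTree.mutCount, unionCount]
    | node tl tr => exact h.elim
  | node s l r ihl ihr =>
    intro T h hm
    cases T with
    | leaf x => exact h.elim
    | node tl tr =>
      obtain ⟨h1, h2, h3, h4⟩ := h
      have hla : l.rootLabel ∈ fitchSet f tl := by
        split_ifs at h1 with hs
        · exact h1 ▸ hs
        · exact h1
      have hrb : r.rootLabel ∈ fitchSet f tr := by
        split_ifs at h2 with hs
        · exact h2 ▸ hs
        · exact h2
      have el := ihl tl h3 hla
      have er := ihr tr h4 hrb
      simp only [LTree.rootLabel, fitchSet] at hm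
      simp only [LTree.mutCount, unionCount, el, er]
      by_cases hint : fitchSet f tl ∩ fitchSet f tr = ∅
      · rw [if_pos hint] at hm
        rw [if_pos hint]
        rcases Finset.mem_union.mp hm with hsl | hsr
        · have hsr : s ∉ fitchSet f tr := by
            intro hc
            have : s ∈ fitchSet f tl ∩ fitchSet f tr := Finset.mem_inter.mpr ⟨hsl, hc⟩
            simp [hint] at this
          rw [if_pos hsl] at h1
          rw [if_neg hsr] at h2
          have hne : r.rootLabel ≠ s := fun hc => hsr (hc ▸ h2)
          simp [h1, hne]
        · have hsl : s ∉ fitchSet f tl := by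
            intro hc
            have : s ∈ fitchSet f tl ∩ fitchSet f tr := Finset.mem_inter.mpr ⟨hc, hsr⟩
            simp [hint] at this
          rw [if_pos hsr] at h2
          rw [if_neg hsl] at h1
          have hne : l.rootLabel ≠ s := fun hc => hsl (hc ▸ h1)
          simp [h2, hne]
      · rw [if_neg hint] at hm
        rw [if_neg hint]
        have hsl := (Finset.mem_inter.mp hm).1
        have hsr := (Finset.mem_inter.mp hm).2
        rw [if_pos hsl] at h1
        rw [if_pos hsr] at h2
        simp [h1, h2]

lemma ext_lb {X S : Type} [DecidableEq S] (f : X → S) :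
    ∀ (L : LTree S) (T : BTree X), IsExtension f L T →
      unionCount f T + (if L.rootLabel ∈ fitchSet f T then 0 else 1) ≤ L.mutCount := by
  intro L
  induction L with
  | leaf s =>
    intro T h
    cases T with
    | leaf x =>
      have h' : s = f x := h
      simp [unionCount, LTree.mutCount, LTree.rootLabel, fitchSet, h']
    | node tl tr => exact h.elim
  | node s l r ihl ihr =>
    intro T h
    cases T with
    | leaf x => exact h.elim
    | node tl tr =>
      obtain ⟨h1, h2⟩ := h
      have IHl := ihl tl h1
      have IHr := ihr tr h2
      have side : ∀ (a : S) (t : BTree X),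
          (if s ∈ fitchSet f t then 0 else 1) ≤
            (if a ∈ fitchSet f t then 0 else 1) + (if a ≠ s then 1 else 0) := by
        intro a t
        by_cases hs : s ∈ fitchSet f t
        · simp [hs]
        · rw [if_neg hs]
          by_cases ha : a = s
          · subst ha; rw [if_neg hs]; omega
          · simp [ha]
      have sidel := side l.rootLabel tl
      have sider := side r.rootLabel tr
      have comb :
          (if s ∈ fitchSet f (BTree.node tl tr) then 0 else 1) +
            (if fitchSet f tl ∩ fitchSet f tr = ∅ then (1:ℕ) else 0) ≤
          (if s ∈ fitchSet f tl then 0 else 1) + (if s ∈ fitchSet f tr then 0 else 1) := by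
        show (if s ∈ (if fitchSet f tl ∩ fitchSet f tr = ∅ then fitchSet f tl ∪ fitchSet f tr
            else fitchSet f tl ∩ fitchSet f tr) then 0 else 1) + _ ≤ _
        by_cases hint : fitchSet f tl ∩ fitchSet f tr = ∅
        · rw [if_pos hint, if_pos hint]
          by_cases hsu : s ∈ fitchSet f tl ∪ fitchSet f tr
          · rw [if_pos hsu]
            rcases Finset.mem_union.mp hsu with hsl | hsr
            · have hn : s ∉ fitchSet f tr := fun hc => by
                have : s ∈ fitchSet f tl ∩ fitchSet f tr := Finset.mem_inter.mpr ⟨hsl, hc⟩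
                simp [hint] at this
              simp [hn]
            · have hn : s ∉ fitchSet f tl := fun hc => by
                have : s ∈ fitchSet f tl ∩ fitchSet f tr := Finset.mem_inter.mpr ⟨hc, hsr⟩
                simp [hint] at this
              simp [hn]
          · rw [if_neg hsu]
            have h1' : s ∉ fitchSet f tl := fun hc => hsu (Finset.mem_union_left _ hc)
            have h2' : s ∉ fitchSet f tr := fun hc => hsu (Finset.mem_union_right _ hc)
            simp [h1', h2']
        · rw [if_neg hint, if_neg hint]
          by_cases hsi : s ∈ fitchSet f tl ∩ fitchSet f tr
          · simp [(Finset.mem_inter.mp hsi).1, (Finset.mem_inter.mp hsi).2]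
          · rw [if_neg hsi]
            by_cases hsl : s ∈ fitchSet f tl
            · have hsr : s ∉ fitchSet f tr := fun hc => hsi (Finset.mem_inter.mpr ⟨hsl, hc⟩)
              simp [hsr]
            · simp [hsl]
      show unionCount f tl + unionCount f tr +
          (if fitchSet f tl ∩ fitchSet f tr = ∅ then 1 else 0) +
          (if (LTree.node s l r).rootLabel ∈ fitchSet f (BTree.node tl tr) then 0 else 1) ≤
        l.mutCount + r.mutCount + (if l.rootLabel ≠ s then 1 else 0) +
          (if r.rootLabel ≠ s then 1 else 0)
      have hroot : (LTree.node s l r).rootLabel = s := rfl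
      rw [hroot]
      omega

theorem fitch_extension_optimal_aux {X S : Type} [DecidableEq S] (f : X → S)
    (T : BTree X) (L : LTree S) (h : IsFitchExtension f L T) :
    L.mutCount = parsimonyScore f T ∧ L.mutCount = unionCount f T := by
  obtain ⟨hm, htd⟩ := h
  have hcount := ftd_count f L T htd hm
  have hext := ftd_ext f L T htd
  refine ⟨?_, hcount⟩
  have hmem : L.mutCount ∈ {n | ∃ L' : LTree S, IsExtension f L' T ∧ L'.mutCount = n} :=
    ⟨L, hext, rfl⟩
  apply le_antisymm
  · refine le_csInf ⟨_, hmem⟩ ?_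
    rintro n ⟨L', hL', rfl⟩
    have := ext_lb f L' T hL'
    rw [hcount]
    omega
  · exact Nat.sInf_le hmem

/-- a Fitch extension is optimal: its number of mutation edges equals the
parsimony score `l_f(T)`, and this number equals the number of union vertices of the
rooted tree `T` with respect to the Fitch map of `f`. -/
theorem fitch_extension_optimal {X S : Type} [DecidableEq S] (f : X → S)
    (T : BTree X) (L : LTree S) (h : IsFitchExtension f L T) :
    L.mutCount = parsimonyScore f T ∧ L.mutCount = unionCount f T :=
  fitch_extension_optimal_aux f T L h
end

section
/- Let Q be a set of pairwise T₁-leg-disjoint incompatible quartets of trees T₁ and T₂ on X. Then for every t ≥ 2 (including t = ∞), d_MP^t(T₁, T₂) ≥ |Q|/27. -/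
open SimpleGraph

variable {X Y S : Type}

namespace PTree

variable {T : PTree X}

/-- The canonical path between two vertices of a tree. -/
noncomputable def pth (T : PTree X) (u v : T.V) : T.G.Walk u v :=
  (T.isTree.existsUnique_path u v).exists.choose

lemma pth_isPath (u v : T.V) : (T.pth u v).IsPath :=
  (T.isTree.existsUnique_path u v).exists.choose_spec

lemma pth_unique {u v : T.V} (p : T.G.Walk u v) (hp : p.IsPath) : p = T.pth u v :=
  (T.isTree.existsUnique_path u v).unique hp (pth_isPath u v)

lemma pth_length (u v : T.V) : (T.pth u v).length = T.G.dist u v := by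
  obtain ⟨p, hp, hl⟩ := T.isTree.isConnected.exists_path_of_dist u v
  rw [← pth_unique p hp] at *
  exact hl

lemma mem_pathSet {u v w : T.V} :
    w ∈ T.pathSet u v ↔ T.G.dist u w + T.G.dist w v = T.G.dist u v := Iff.rfl

/-- Every vertex of a geodesic walk satisfies the metric betweenness equation. -/
lemma support_subset_pathSet {u v : T.V} (p : T.G.Walk u v)
    (hl : p.length = T.G.dist u v) {w : T.V} (hw : w ∈ p.support) :
    w ∈ T.pathSet u v := by
  have hsplit := p.take_spec hw
  have hlen : (p.takeUntil w hw).length + (p.dropUntil w hw).length = p.length := by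
    rw [← SimpleGraph.Walk.length_append, hsplit]
  have h1 : T.G.dist u w ≤ (p.takeUntil w hw).length := SimpleGraph.dist_le _
  have h2 : T.G.dist w v ≤ (p.dropUntil w hw).length := SimpleGraph.dist_le _
  have h3 : T.G.dist u v ≤ T.G.dist u w + T.G.dist w v :=
    T.isTree.isConnected.dist_triangle
  rw [mem_pathSet]
  omega

lemma pathSet_eq_support (u v : T.V) :
    T.pathSet u v = {w | w ∈ (T.pth u v).support} := by
  ext w
  constructor
  · intro hw
    rw [mem_pathSet] at hw
    have hlen : ((T.pth u w).append (T.pth w v)).length = T.G.dist u v := by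
      rw [SimpleGraph.Walk.length_append, pth_length, pth_length, hw]
    have hp : ((T.pth u w).append (T.pth w v)).IsPath :=
      SimpleGraph.Walk.isPath_of_length_eq_dist _ hlen
    have := pth_unique _ hp
    rw [Set.mem_setOf_eq, ← this]
    rw [SimpleGraph.Walk.mem_support_append_iff]
    exact Or.inl (SimpleGraph.Walk.end_mem_support _)
  · intro hw
    exact support_subset_pathSet _ (pth_length u v) hw

lemma left_mem_pathSet (u v : T.V) : u ∈ T.pathSet u v := by
  rw [mem_pathSet, SimpleGraph.dist_self]; omega

lemma right_mem_pathSet (u v : T.V) : v ∈ T.pathSet u v := by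
  rw [mem_pathSet, SimpleGraph.dist_self]; omega

lemma pathSet_comm (u v : T.V) : T.pathSet u v = T.pathSet v u := by
  ext w
  rw [mem_pathSet, mem_pathSet, SimpleGraph.dist_comm (u := u) (v := w),
    SimpleGraph.dist_comm (u := w) (v := v), SimpleGraph.dist_comm (u := u) (v := v)]
  omega

lemma dist_eq_zero {u v : T.V} (h : T.G.dist u v = 0) : u = v :=
  (T.isTree.isConnected.dist_eq_zero_iff).mp h

/-- Splitting a path set at one of its members. -/
lemma pathSet_split {u v w : T.V} (hw : w ∈ T.pathSet u v) {x : T.V}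
    (hx : x ∈ T.pathSet u v) : x ∈ T.pathSet u w ∨ x ∈ T.pathSet w v := by
  rw [pathSet_eq_support] at hx hw
  have hsplit := (T.pth u v).take_spec hw
  have hlen : ((T.pth u v).takeUntil w hw).length + ((T.pth u v).dropUntil w hw).length
      = (T.pth u v).length := by
    rw [← SimpleGraph.Walk.length_append, hsplit]
  have h1 : T.G.dist u w ≤ ((T.pth u v).takeUntil w hw).length := SimpleGraph.dist_le _
  have h2 : T.G.dist w v ≤ ((T.pth u v).dropUntil w hw).length := SimpleGraph.dist_le _
  have hwp : T.G.dist u w + T.G.dist w v = T.G.dist u v :=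
    (support_subset_pathSet _ (pth_length u v) hw)
  have hpl := pth_length (T := T) u v
  have hlt : ((T.pth u v).takeUntil w hw).length = T.G.dist u w := by omega
  have hld : ((T.pth u v).dropUntil w hw).length = T.G.dist w v := by omega
  have hx' : x ∈ ((T.pth u v).takeUntil w hw).support ∨
      x ∈ ((T.pth u v).dropUntil w hw).support := by
    rw [Set.mem_setOf_eq, ← hsplit, SimpleGraph.Walk.mem_support_append_iff] at hx
    exact hx
  rcases hx' with h | h
  · exact Or.inl (support_subset_pathSet _ hlt h)
  · exact Or.inr (support_subset_pathSet _ hld h)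

/-- Transitivity along a path. -/
lemma pathSet_trans {a b x y : T.V} (hx : x ∈ T.pathSet a y) (hy : y ∈ T.pathSet a b) :
    x ∈ T.pathSet a b := by
  rw [mem_pathSet] at *
  have h1 : T.G.dist x b ≤ T.G.dist x y + T.G.dist y b := T.isTree.isConnected.dist_triangle
  have h2 : T.G.dist a b ≤ T.G.dist a x + T.G.dist x b := T.isTree.isConnected.dist_triangle
  omega

/-- Linearity: of two points on a geodesic, the nearer lies on the path to the farther. -/
lemma pathSet_linear {a b x y : T.V} (hx : x ∈ T.pathSet a b) (hy : y ∈ T.pathSet a b)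
    (hxy : T.G.dist a x ≤ T.G.dist a y) : x ∈ T.pathSet a y ∧ y ∈ T.pathSet x b := by
  have h1 := pathSet_split hy hx
  have h2 := pathSet_split hx hy
  have hc : T.G.dist y x = T.G.dist x y := SimpleGraph.dist_comm
  constructor
  · rcases h1 with h | h
    · exact h
    · have hxy0 : T.G.dist x y = 0 := by
        rw [mem_pathSet] at *; omega
      have hE := dist_eq_zero hxy0
      subst hE
      rw [mem_pathSet, SimpleGraph.dist_self]; omega
  · rcases h2 with h | h
    · have hxy0 : T.G.dist x y = 0 := by
        rw [mem_pathSet] at *; omega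
      have hE := dist_eq_zero hxy0
      subst hE
      rw [mem_pathSet] at hx ⊢
      rw [SimpleGraph.dist_self]; omega
    · exact h

/-- Appending two paths whose supports only share the junction is a path. -/
lemma isPath_append {u v w : T.V} {p : T.G.Walk u v} {q : T.G.Walk v w}
    (hp : p.IsPath) (hq : q.IsPath)
    (h : ∀ x, x ∈ p.support → x ∈ q.support → x = v) : (p.append q).IsPath := by
  rw [SimpleGraph.Walk.isPath_def, SimpleGraph.Walk.support_append]
  apply List.Nodup.append hp.support_nodup
  · have := hq.support_nodup
    rw [q.support_eq_cons] at this
    exact this.of_cons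
  · intro x hxp hxq
    have hxq' : x ∈ q.support := by
      rw [q.support_eq_cons]; exact List.mem_cons_of_mem _ hxq
    have hx := h x hxp hxq'
    subst hx
    have := hq.support_nodup
    rw [q.support_eq_cons] at this
    exact (List.nodup_cons.mp this).1 hxq

/-- First vertex of a walk lying in a set `S` (which contains the endpoint). -/
lemma exists_first_hit {S : Set T.V} : ∀ {c a : T.V} (p : T.G.Walk c a) (_ : a ∈ S),
    ∃ w, w ∈ S ∧ ∃ (p₁ : T.G.Walk c w) (p₂ : T.G.Walk w a),
      p = p₁.append p₂ ∧ ∀ u ∈ p₁.support, u ∈ S → u = w := by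
  classical
  intro c a p
  induction p with
  | nil =>
    intro ha
    exact ⟨_, ha, SimpleGraph.Walk.nil, SimpleGraph.Walk.nil, rfl,
      fun u hu _ => by simpa using hu⟩
  | @cons u v z h q ih =>
    intro ha
    by_cases hc : u ∈ S
    · exact ⟨u, hc, SimpleGraph.Walk.nil, SimpleGraph.Walk.cons h q, rfl,
        fun x hx _ => by simpa using hx⟩
    · obtain ⟨w, hw, p₁, p₂, heq, hfirst⟩ := ih ha
      refine ⟨w, hw, SimpleGraph.Walk.cons h p₁, p₂,
        by rw [SimpleGraph.Walk.cons_append, heq], ?_⟩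
      intro x hx hxS
      rw [SimpleGraph.Walk.support_cons] at hx
      rcases List.mem_cons.mp hx with rfl | hx
      · exact absurd hxS hc
      · exact hfirst x hx hxS

/-- Median: three vertices of a tree have a common point on all three connecting paths. -/
lemma exists_median (T : PTree X) (a b c : T.V) :
    ∃ m, m ∈ T.pathSet a b ∧ m ∈ T.pathSet a c ∧ m ∈ T.pathSet b c := by
  classical
  have ha : a ∈ {w | w ∈ (T.pth a b).support} := SimpleGraph.Walk.start_mem_support _
  obtain ⟨w, hwS, p₁, p₂, heq, hfirst⟩ :=
    exists_first_hit (S := {w | w ∈ (T.pth a b).support}) (T.pth c a) ha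
  have hw_ab : w ∈ T.pathSet a b := by rw [pathSet_eq_support]; exact hwS
  have hp₁ : p₁.IsPath := by
    have := pth_isPath (T := T) c a
    rw [heq] at this
    exact this.of_append_left
  have hw_ca : w ∈ T.pathSet c a := by
    rw [pathSet_eq_support, Set.mem_setOf_eq, heq,
      SimpleGraph.Walk.mem_support_append_iff]
    exact Or.inl (SimpleGraph.Walk.end_mem_support _)
  have hw_ac : w ∈ T.pathSet a c := by rw [pathSet_comm]; exact hw_ca
  -- now w ∈ pathSet b c via the concatenated path c → w → b
  have hwS' : w ∈ (T.pth a b).support := hwS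
  have hq₂ : ((T.pth a b).dropUntil w hwS').IsPath := (pth_isPath a b).dropUntil _
  have hr : (p₁.append ((T.pth a b).dropUntil w hwS')).IsPath := by
    apply isPath_append hp₁ hq₂
    intro x hxp hxq
    exact hfirst x hxp (SimpleGraph.Walk.support_dropUntil_subset _ _ hxq)
  have := pth_unique _ hr
  have hw_cb : w ∈ T.pathSet c b := by
    rw [pathSet_eq_support, Set.mem_setOf_eq, ← this,
      SimpleGraph.Walk.mem_support_append_iff]
    exact Or.inl (SimpleGraph.Walk.end_mem_support _)
  refine ⟨w, hw_ab, hw_ac, by rw [pathSet_comm]; exact hw_cb⟩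
lemma tri (x y z : T.V) : T.G.dist x z ≤ T.G.dist x y + T.G.dist y z :=
  T.isTree.isConnected.dist_triangle

lemma dcomm (x y : T.V) : T.G.dist x y = T.G.dist y x := SimpleGraph.dist_comm

/-- Points on the `c`-branch at a median `u` of `a b c`. -/
lemma branch_eq {a b c u x : T.V} (hu_ac : u ∈ T.pathSet a c) (hu_bc : u ∈ T.pathSet b c)
    (hx : x ∈ T.pathSet u c) :
    x ∈ T.pathSet a c ∧ T.G.dist a x = T.G.dist a u + T.G.dist u x ∧
      T.G.dist b x = T.G.dist b u + T.G.dist u x := by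
  rw [mem_pathSet] at *
  have t1 := tri (T := T) a x c
  have t2 := tri (T := T) a u x
  have t3 := tri (T := T) b x c
  have t4 := tri (T := T) b u x
  omega

/-- A point on both the `c`-branch at the median `u` of `a b c` and on the `a`–`b` path
is the median itself. -/
lemma branch_unique {a b c u x : T.V} (hu_ab : u ∈ T.pathSet a b)
    (hu_ac : u ∈ T.pathSet a c) (hu_bc : u ∈ T.pathSet b c)
    (hx : x ∈ T.pathSet u c) (hxab : x ∈ T.pathSet a b) : x = u := by
  obtain ⟨_, h1, h2⟩ := branch_eq hu_ac hu_bc hx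
  rw [mem_pathSet] at hu_ab hxab
  have c1 := dcomm (T := T) x b
  have c2 := dcomm (T := T) u b
  have hz : T.G.dist u x = 0 := by omega
  exact (dist_eq_zero hz).symm

/-- In a tree, if the `a`–`b` and `c`–`d` paths are disjoint, then the `a`–`c` and
`b`–`d` paths intersect. -/
lemma cross_nonempty {a b c d : T.V} (H : T.pathSet a b ∩ T.pathSet c d = ∅) :
    (T.pathSet a c ∩ T.pathSet b d).Nonempty := by
  obtain ⟨u, hu_ab, hu_ac, hu_bc⟩ := exists_median T a b c
  obtain ⟨v, hv_ab, hv_ad, hv_bd⟩ := exists_median T a b d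
  have hH := Set.eq_empty_iff_forall_notMem.mp H
  by_cases h1 : T.G.dist a v ≤ T.G.dist a u
  · have hPL := pathSet_linear hv_ab hu_ab h1
    refine ⟨u, hu_ac, ?_⟩
    have hb := hPL.2
    rw [mem_pathSet] at *
    have t1 := tri (T := T) b u d
    have t2 := tri (T := T) u v d
    have c1 := dcomm (T := T) b u
    have c2 := dcomm (T := T) b v
    have c3 := dcomm (T := T) u v
    have c4 := dcomm (T := T) v b
    have c5 := dcomm (T := T) u b
    omega
  · exfalso
    push_neg at h1
    have hPL := pathSet_linear hu_ab hv_ab (le_of_lt h1)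
    obtain ⟨w, hw_cd, hw_ca, hw_da⟩ := exists_median T c d a
    have hw_ac : w ∈ T.pathSet a c := by rw [pathSet_comm]; exact hw_ca
    have hw_ad : w ∈ T.pathSet a d := by rw [pathSet_comm]; exact hw_da
    by_cases hca : T.G.dist a w ≤ T.G.dist a u
    · have h3 : w ∈ T.pathSet a u := (pathSet_linear hw_ac hu_ac hca).1
      have h4 : w ∈ T.pathSet a b := pathSet_trans h3 hu_ab
      exact hH w ⟨h4, hw_cd⟩
    · push_neg at hca
      by_cases hwv : T.G.dist a w ≤ T.G.dist a v
      · have h3 : w ∈ T.pathSet a v := (pathSet_linear hw_ad hv_ad hwv).1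
        have h4 : w ∈ T.pathSet a b := pathSet_trans h3 hv_ab
        exact hH w ⟨h4, hw_cd⟩
      · push_neg at hwv
        have h5 := pathSet_linear hu_ac hw_ac (le_of_lt hca)
        have h6 := pathSet_linear hv_ad hw_ad (le_of_lt hwv)
        have hbeq := branch_eq (T := T) hu_ac hu_bc h5.2
        have hvuc : v ∈ T.pathSet u c := by
          have hPL1 := hPL.1
          have h61 := h6.1
          have h52 := h5.2
          rw [mem_pathSet] at *
          have t1 := tri (T := T) u v c
          have t2 := tri (T := T) v w c
          obtain ⟨_, hb1, _⟩ := hbeq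
          omega
        have := branch_unique hu_ab hu_ac hu_bc hvuc hv_ab
        subst this
        omega
/-- An internal vertex of a canonical path has two distinct path-neighbours. -/
lemma internal_edges {u v w : T.V} (hne_u : w ≠ u) (hne_v : w ≠ v)
    (hw : w ∈ (T.pth u v).support) :
    ∃ x y : T.V, x ≠ y ∧ T.G.Adj w x ∧ T.G.Adj w y ∧
      s(w, x) ∈ (T.pth u v).edges ∧ s(w, y) ∈ (T.pth u v).edges := by
  set p := T.pth u v with hp
  have ht : ¬(p.takeUntil w hw).reverse.Nil :=
    SimpleGraph.Walk.not_nil_of_ne hne_u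
  have hr : ¬(p.dropUntil w hw).Nil := SimpleGraph.Walk.not_nil_of_ne hne_v
  obtain ⟨x, hadjx, qx, heqx⟩ := SimpleGraph.Walk.not_nil_iff.mp ht
  obtain ⟨y, hadjy, qy, heqy⟩ := SimpleGraph.Walk.not_nil_iff.mp hr
  have hex : s(w, x) ∈ (p.takeUntil w hw).edges := by
    have : s(w, x) ∈ (p.takeUntil w hw).reverse.edges := by
      rw [heqx, SimpleGraph.Walk.edges_cons]; exact List.mem_cons_self
    rwa [SimpleGraph.Walk.edges_reverse, List.mem_reverse] at this
  have hey : s(w, y) ∈ (p.dropUntil w hw).edges := by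
    rw [heqy, SimpleGraph.Walk.edges_cons]; exact List.mem_cons_self
  refine ⟨x, y, ?_, hadjx, hadjy,
    SimpleGraph.Walk.edges_takeUntil_subset p hw hex,
    SimpleGraph.Walk.edges_dropUntil_subset p hw hey⟩
  intro hxyeq
  subst hxyeq
  have hxt : x ∈ (p.takeUntil w hw).support :=
    SimpleGraph.Walk.snd_mem_support_of_mem_edges _ hex
  have hxr : x ∈ (p.dropUntil w hw).support :=
    SimpleGraph.Walk.snd_mem_support_of_mem_edges _ hey
  have hsupp : p.support = (p.takeUntil w hw).support ++ (p.dropUntil w hw).support.tail := by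
    rw [← SimpleGraph.Walk.support_append, p.take_spec hw]
  have hnd : ((p.takeUntil w hw).support ++ (p.dropUntil w hw).support.tail).Nodup := by
    rw [← hsupp]; exact (pth_isPath u v).support_nodup
  have hdisj := (List.nodup_append.mp hnd).2.2
  have hxtail : x ∈ (p.dropUntil w hw).support.tail := by
    have := (p.dropUntil w hw).support_eq_cons
    rw [this] at hxr
    rcases List.mem_cons.mp hxr with h | h
    · exact absurd h ((T.G.ne_of_adj hadjx).symm)
    · exact h
  exact hdisj x hxt x hxtail rfl

lemma two_le_degree_of_internal {u v w : T.V} (hne_u : w ≠ u) (hne_v : w ≠ v)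
    (hw : w ∈ (T.pth u v).support) : 2 ≤ T.G.degree w := by
  obtain ⟨x, y, hxy, hx, hy, -, -⟩ := internal_edges hne_u hne_v hw
  have hsub : ({x, y} : Finset T.V) ⊆ T.G.neighborFinset w := by
    intro z hz
    rw [SimpleGraph.mem_neighborFinset]
    rcases Finset.mem_insert.mp hz with rfl | hz
    · exact hx
    · rw [Finset.mem_singleton] at hz; subst hz; exact hy
  calc 2 = ({x, y} : Finset T.V).card := (Finset.card_pair hxy).symm
    _ ≤ (T.G.neighborFinset w).card := Finset.card_le_card hsub
    _ = T.G.degree w := rfl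

/-- The quartet leaves are pairwise distinct, the two paths share a vertex; then (by the
degree-3 bound) they share an edge. -/
lemma exists_shared_edge (T : PTree X) {a b c d : X}
    (hab : a ≠ b) (hac : a ≠ c) (had : a ≠ d) (hbc : b ≠ c) (hbd : b ≠ d) (hcd : c ≠ d)
    (hw : (T.pathSet (T.leaf a) (T.leaf b) ∩ T.pathSet (T.leaf c) (T.leaf d)).Nonempty) :
    ∃ e, e ∈ (T.pth (T.leaf a) (T.leaf b)).edges ∧ e ∈ (T.pth (T.leaf c) (T.leaf d)).edges := by
  obtain ⟨w, hw1, hw2⟩ := hw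
  rw [pathSet_eq_support] at hw1 hw2
  have hleafne : ∀ x y : X, x ≠ y → w ≠ T.leaf x → (w : T.V) ≠ T.leaf y → True := fun _ _ _ _ _ => trivial
  -- w is distinct from all four leaf vertices
  have hwa : w ≠ T.leaf a := by
    rintro rfl
    have h1 : T.leaf a ≠ T.leaf c := fun h => hac (T.leaf_inj h)
    have h2 : T.leaf a ≠ T.leaf d := fun h => had (T.leaf_inj h)
    exact absurd (two_le_degree_of_internal h1 h2 hw2) (by have := T.leaf_deg a; omega)
  have hwb : w ≠ T.leaf b := by
    rintro rfl
    have h1 : T.leaf b ≠ T.leaf c := fun h => hbc (T.leaf_inj h)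
    have h2 : T.leaf b ≠ T.leaf d := fun h => hbd (T.leaf_inj h)
    exact absurd (two_le_degree_of_internal h1 h2 hw2) (by have := T.leaf_deg b; omega)
  have hwc : w ≠ T.leaf c := by
    rintro rfl
    have h1 : T.leaf c ≠ T.leaf a := fun h => hac (T.leaf_inj h.symm)
    have h2 : T.leaf c ≠ T.leaf b := fun h => hbc (T.leaf_inj h.symm)
    exact absurd (two_le_degree_of_internal h1 h2 hw1) (by have := T.leaf_deg c; omega)
  have hwd : w ≠ T.leaf d := by
    rintro rfl
    have h1 : T.leaf d ≠ T.leaf a := fun h => had (T.leaf_inj h.symm)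
    have h2 : T.leaf d ≠ T.leaf b := fun h => hbd (T.leaf_inj h.symm)
    exact absurd (two_le_degree_of_internal h1 h2 hw1) (by have := T.leaf_deg d; omega)
  obtain ⟨x1, y1, hxy1, hax1, hay1, he1, he1'⟩ := internal_edges hwa hwb hw1
  obtain ⟨x2, y2, hxy2, hax2, hay2, he2, he2'⟩ := internal_edges hwc hwd hw2
  -- pigeonhole among at most 3 neighbours
  have hmem : ∀ z, T.G.Adj w z → z ∈ T.G.neighborFinset w := fun z hz =>
    (SimpleGraph.mem_neighborFinset _ _ _).mpr hz
  have hinter : ¬ Disjoint ({x1, y1} : Finset T.V) ({x2, y2} : Finset T.V) := by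
    intro hdisj
    have hsub : ({x1, y1} ∪ {x2, y2} : Finset T.V) ⊆ T.G.neighborFinset w := by
      intro z hz
      rcases Finset.mem_union.mp hz with h | h
      · rcases Finset.mem_insert.mp h with rfl | h
        · exact hmem _ hax1
        · rw [Finset.mem_singleton] at h; subst h; exact hmem _ hay1
      · rcases Finset.mem_insert.mp h with rfl | h
        · exact hmem _ hax2
        · rw [Finset.mem_singleton] at h; subst h; exact hmem _ hay2
    have hcard : ({x1, y1} ∪ {x2, y2} : Finset T.V).card = 4 := by
      rw [Finset.card_union_of_disjoint hdisj, Finset.card_pair hxy1, Finset.card_pair hxy2]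
    have := Finset.card_le_card hsub
    have hdeg := T.max_deg w
    rw [hcard] at this
    exact absurd (this.trans hdeg) (by omega)
  rw [Finset.not_disjoint_iff] at hinter
  obtain ⟨z, hz1, hz2⟩ := hinter
  have hez1 : s(w, z) ∈ (T.pth (T.leaf a) (T.leaf b)).edges := by
    rcases Finset.mem_insert.mp hz1 with rfl | h
    · exact he1
    · rw [Finset.mem_singleton] at h; subst h; exact he1'
  have hez2 : s(w, z) ∈ (T.pth (T.leaf c) (T.leaf d)).edges := by
    rcases Finset.mem_insert.mp hz2 with rfl | h
    · exact he2
    · rw [Finset.mem_singleton] at h; subst h; exact he2'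
  exact ⟨s(w, z), hez1, hez2⟩
section Parity

variable (D : Finset (Sym2 T.V)) (r : T.V)

/-- Parity counter: number of `D`-edges on the canonical path from `r`. -/
noncomputable def cntD (v : T.V) : ℕ := (T.pth r v).edges.countP (· ∈ D)

lemma single_edge_isPath {u v : T.V} (h : T.G.Adj u v) :
    (SimpleGraph.Walk.cons h SimpleGraph.Walk.nil).IsPath := by
  simp [SimpleGraph.Walk.isPath_def, h.ne]

lemma cntD_adj {u v : T.V} (h : T.G.Adj u v) :
    (cntD D r u + cntD D r v) % 2 = if s(u, v) ∈ D then 1 else 0 := by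
  classical
  have key : ∀ (a b : T.V) (hab : T.G.Adj a b), b ∈ (T.pth r a).support →
      cntD D r a = cntD D r b + (if s(a, b) ∈ D then 1 else 0) := by
    intro a b hab hb
    set p := T.pth r a with hp
    have htake : p.takeUntil b hb = T.pth r b :=
      pth_unique _ ((pth_isPath r a).takeUntil hb)
    have hdrop : p.dropUntil b hb = SimpleGraph.Walk.cons hab.symm SimpleGraph.Walk.nil := by
      have h1 := pth_unique _ ((pth_isPath r a).dropUntil hb)
      have h2 := pth_unique _ (single_edge_isPath (T := T) hab.symm)
      rw [h1, h2]
    have hedges : p.edges = (T.pth r b).edges ++ [s(b, a)] := by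
      conv_lhs => rw [← p.take_spec hb]
      rw [SimpleGraph.Walk.edges_append, htake, hdrop]
      simp [SimpleGraph.Walk.edges_cons]
    show p.edges.countP (· ∈ D) = _
    rw [hedges, List.countP_append]
    simp only [List.countP_cons, List.countP_nil]
    have : s(b, a) = s(a, b) := Sym2.eq_swap
    rw [this]
    by_cases hD : s(a, b) ∈ D <;> simp [hD, cntD]
  by_cases hv : v ∈ (T.pth r u).support
  · rw [key u v h hv]
    by_cases hD : s(u, v) ∈ D <;> simp [hD] <;> omega
  · by_cases hu : u ∈ (T.pth r v).support
    · have : s(v, u) = s(u, v) := Sym2.eq_swap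
      rw [key v u h.symm hu, this]
      by_cases hD : s(u, v) ∈ D <;> simp [hD] <;> omega
    · -- v not on the path to u: extend
      have hcat : ((T.pth r u).concat h).IsPath := by
        rw [SimpleGraph.Walk.isPath_def, SimpleGraph.Walk.support_concat]
        rw [List.nodup_append]
        refine ⟨(pth_isPath r u).support_nodup, List.nodup_singleton _, ?_⟩
        intro x hx y hy hxy
        rw [List.mem_singleton] at hy
        subst hy hxy
        exact hv hx
      have := pth_unique _ hcat
      have hedges : (T.pth r v).edges = (T.pth r u).edges ++ [s(u, v)] := by
        rw [← this, SimpleGraph.Walk.edges_concat, List.concat_eq_append]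
      have : cntD D r v = cntD D r u + (if s(u, v) ∈ D then 1 else 0) := by
        show (T.pth r v).edges.countP (· ∈ D) = _
        rw [hedges, List.countP_append]
        simp only [List.countP_cons, List.countP_nil]
        by_cases hD : s(u, v) ∈ D <;> simp [hD, cntD]
      rw [this]
      by_cases hD : s(u, v) ∈ D <;> simp [hD] <;> omega

/-- Parity along any walk. -/
lemma cntD_walk {u v : T.V} (p : T.G.Walk u v) :
    (p.edges.countP (· ∈ D) + cntD D r u + cntD D r v) % 2 = 0 := by
  classical
  induction p with
  | nil => simp; omega
  | @cons x y z hadj q ih =>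
    rw [SimpleGraph.Walk.edges_cons, List.countP_cons]
    have hstep := cntD_adj (T := T) D r hadj
    by_cases hD : s(x, y) ∈ D <;> simp [hD] at hstep ⊢ <;> omega
end Parity
section Score

open Classical in
/-- Default extension of a leaf character to all vertices. -/
noncomputable def extendChar (T : PTree X) (f : X → ℕ) : T.V → ℕ := fun v =>
  if h : ∃ x, T.leaf x = v then f h.choose else 0

lemma extendChar_leaf (T : PTree X) (f : X → ℕ) (x : X) :
    T.extendChar f (T.leaf x) = f x := by
  have h : ∃ y, T.leaf y = T.leaf x := ⟨x, rfl⟩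
  rw [extendChar]
  rw [dif_pos h]
  congr 1
  exact T.leaf_inj h.choose_spec

lemma lscore_le_mutCount {f : X → ℕ} (g : T.V → ℕ) (hg : ∀ x, g (T.leaf x) = f x) :
    T.lscore f ≤ T.mutCount g :=
  Nat.sInf_le ⟨g, hg, rfl⟩

lemma le_lscore {f : X → ℕ} (m : ℕ)
    (h : ∀ g : T.V → ℕ, (∀ x, g (T.leaf x) = f x) → m ≤ T.mutCount g) :
    m ≤ T.lscore f := by
  have hne : {n | ∃ g : T.V → ℕ, (∀ x, g (T.leaf x) = f x) ∧ T.mutCount g = n}.Nonempty :=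
    ⟨T.mutCount (T.extendChar f), T.extendChar f, extendChar_leaf T f, rfl⟩
  apply le_csInf hne
  rintro n ⟨g, hg, rfl⟩
  exact h g hg

lemma mutCount_le_card {g : T.V → ℕ} {D : Finset (Sym2 T.V)}
    (h : ∀ e, e ∈ T.G.edgeSet → ¬(Sym2.map g e).IsDiag → e ∈ D) :
    T.mutCount g ≤ D.card := by
  have hsub : {e ∈ T.G.edgeSet | ¬(Sym2.map g e).IsDiag} ⊆ ↑D := by
    intro e he
    exact h e he.1 he.2
  calc T.mutCount g ≤ (↑D : Set (Sym2 T.V)).ncard :=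
        Set.ncard_le_ncard hsub (Set.toFinite _)
    _ = D.card := Set.ncard_coe_finset D

/-- The parity colouring has its mutation edges inside `D`. -/
lemma mutCount_parity_le (D : Finset (Sym2 T.V)) (r : T.V) :
    T.mutCount (fun v => cntD D r v % 2) ≤ D.card := by
  classical
  apply mutCount_le_card
  intro e
  induction e using Sym2.ind with
  | _ u v =>
    intro he hd
    rw [Sym2.map_pair_eq, Sym2.mk_isDiag_iff] at hd
    by_contra hD
    have := cntD_adj (T := T) D r ((SimpleGraph.mem_edgeSet _).mp he)
    rw [if_neg hD] at this
    exact hd (by omega)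

/-- A walk between differently-coloured vertices contains a mutation edge. -/
lemma walk_mut {g : T.V → ℕ} : ∀ {u v : T.V} (p : T.G.Walk u v), g u ≠ g v →
    ∃ e, e ∈ p.edges ∧ ¬(Sym2.map g e).IsDiag := by
  intro u v p
  induction p with
  | nil => intro h; exact absurd rfl h
  | @cons x y z hadj q ih =>
    intro h
    by_cases hxy : g x = g y
    · obtain ⟨e, he, hd⟩ := ih (by rw [← hxy] at *; exact h)
      exact ⟨e, by rw [SimpleGraph.Walk.edges_cons]; exact List.mem_cons_of_mem _ he, hd⟩
    · refine ⟨s(x, y), by rw [SimpleGraph.Walk.edges_cons]; exact List.mem_cons_self, ?_⟩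
      rw [Sym2.map_pair_eq, Sym2.mk_isDiag_iff]
      exact hxy

/-- Disjoint bichromatic pairs give a lower bound on the mutation count. -/
lemma le_mutCount_of_pairs {ι : Type} (A : Finset ι) (xy : ι → T.V × T.V)
    (g : T.V → ℕ)
    (hbi : ∀ i ∈ A, g (xy i).1 ≠ g (xy i).2)
    (hdisj : ∀ i ∈ A, ∀ j ∈ A, i ≠ j →
      T.pathSet (xy i).1 (xy i).2 ∩ T.pathSet (xy j).1 (xy j).2 = ∅) :
    A.card ≤ T.mutCount g := by
  classical
  have hV : Nonempty T.V := T.isTree.isConnected.nonempty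
  obtain ⟨v₀⟩ := hV
  have hex : ∀ i : ι, ∃ e : Sym2 T.V, i ∈ A →
      (e ∈ T.G.edgeSet ∧ ¬(Sym2.map g e).IsDiag ∧
        e ∈ (T.pth (xy i).1 (xy i).2).edges) := by
    intro i
    by_cases hi : i ∈ A
    · obtain ⟨e, he, hd⟩ := walk_mut (T.pth (xy i).1 (xy i).2) (hbi i hi)
      exact ⟨e, fun _ => ⟨(T.pth _ _).edges_subset_edgeSet he, hd, he⟩⟩
    · exact ⟨s(v₀, v₀), fun h => absurd h hi⟩
  choose F hF using hex
  have hinj : Set.InjOn F ↑A := by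
    intro i hi j hj hFij
    by_contra hne
    obtain ⟨h1i, h2i, h3i⟩ := hF i hi
    obtain ⟨h1j, h2j, h3j⟩ := hF j hj
    rw [hFij] at h3i
    -- an endpoint of the common edge lies in both path sets
    have key : ∀ (e : Sym2 T.V), e ∈ (T.pth (xy i).1 (xy i).2).edges →
        e ∈ (T.pth (xy j).1 (xy j).2).edges → False := by
      intro e
      induction e using Sym2.ind with
      | _ x0 y0 =>
        intro hei hej
        have hx0i : x0 ∈ (T.pth (xy i).1 (xy i).2).support :=
          SimpleGraph.Walk.fst_mem_support_of_mem_edges _ hei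
        have hx0j : x0 ∈ (T.pth (xy j).1 (xy j).2).support :=
          SimpleGraph.Walk.fst_mem_support_of_mem_edges _ hej
        have h1 : x0 ∈ T.pathSet (xy i).1 (xy i).2 :=
          support_subset_pathSet _ (pth_length _ _) hx0i
        have h2 : x0 ∈ T.pathSet (xy j).1 (xy j).2 :=
          support_subset_pathSet _ (pth_length _ _) hx0j
        exact Set.eq_empty_iff_forall_notMem.mp (hdisj i hi j hj hne) x0 ⟨h1, h2⟩
    exact key (F j) h3i h3j
  calc A.card = (A.image F).card := (Finset.card_image_of_injOn hinj).symm
    _ = (↑(A.image F) : Set (Sym2 T.V)).ncard := (Set.ncard_coe_finset _).symm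
    _ ≤ {e ∈ T.G.edgeSet | ¬(Sym2.map g e).IsDiag}.ncard := by
        apply Set.ncard_le_ncard ?_ (Set.toFinite _)
        intro e he
        rw [Finset.mem_coe, Finset.mem_image] at he
        obtain ⟨i, hi, rfl⟩ := he
        obtain ⟨he1, he2, -⟩ := hF i hi
        exact ⟨he1, he2⟩
    _ = T.mutCount g := rfl

end Score
end PTree

/-- Exactly half of the subsets of `E0` meet a fixed nodup list `L` (containing some
element of `E0`) an odd number of times. -/
lemma oddcount {α : Type} [DecidableEq α] (E0 : Finset α) (L : List α) (hnd : L.Nodup)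
    (e₀ : α) (h0 : e₀ ∈ E0) (hL : e₀ ∈ L) :
    (E0.powerset.filter (fun D => (L.countP (· ∈ D)) % 2 = 1)).card = 2 ^ (E0.card - 1) := by
  classical
  set Φ : Finset α → Finset α := fun D => if e₀ ∈ D then D.erase e₀ else insert e₀ D with hΦ
  have hflip : ∀ D : Finset α, (L.countP (· ∈ Φ D)) % 2 = 1 - (L.countP (· ∈ D)) % 2 := by
    intro D
    have hperm : L.Perm (e₀ :: L.erase e₀) := List.perm_cons_erase hL
    have hcount : ∀ (D' : Finset α), L.countP (· ∈ D') =
        (if e₀ ∈ D' then 1 else 0) + (L.erase e₀).countP (· ∈ D') := by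
      intro D'
      rw [hperm.countP_eq, List.countP_cons]
      simp only [decide_eq_true_eq]
      by_cases h : e₀ ∈ D' <;> simp [h] <;> omega
    have herase : (L.erase e₀).countP (· ∈ Φ D) = (L.erase e₀).countP (· ∈ D) := by
      apply List.countP_congr
      intro z hz
      have hzne : z ≠ e₀ := ((List.Nodup.mem_erase_iff hnd).mp hz).1
      simp only [decide_eq_true_eq, hΦ]
      by_cases h : e₀ ∈ D
      · rw [if_pos h, Finset.mem_erase]
        constructor
        · rintro ⟨-, hzD⟩; simp [hzD]
        · intro hzD; exact ⟨hzne, hzD⟩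
      · rw [if_neg h, Finset.mem_insert]
        constructor
        · rintro (rfl | hzD); exact absurd rfl hzne; simp [hzD]
        · intro hzD; exact Or.inr hzD
    have he₀Φ : (e₀ ∈ Φ D) ↔ ¬(e₀ ∈ D) := by
      by_cases h : e₀ ∈ D <;> simp [hΦ, h]
    rw [hcount (Φ D), hcount D, herase]
    by_cases h : e₀ ∈ D
    · rw [if_pos h, if_neg (by simp [he₀Φ, h])]; omega
    · rw [if_neg h, if_pos (he₀Φ.mpr h)]; omega
  have hΦinv : ∀ D : Finset α, Φ (Φ D) = D := by
    intro D
    by_cases h : e₀ ∈ D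
    · have : Φ D = D.erase e₀ := if_pos h
      rw [this]
      have h2 : e₀ ∉ D.erase e₀ := Finset.notMem_erase _ _
      show (if e₀ ∈ D.erase e₀ then _ else insert e₀ (D.erase e₀)) = D
      rw [if_neg h2, Finset.insert_erase h]
    · have : Φ D = insert e₀ D := if_neg h
      rw [this]
      show (if e₀ ∈ insert e₀ D then (insert e₀ D).erase e₀ else _) = D
      rw [if_pos (Finset.mem_insert_self _ _), Finset.erase_insert h]
  have hΦmem : ∀ D ∈ E0.powerset, Φ D ∈ E0.powerset := by
    intro D hD
    rw [Finset.mem_powerset] at *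
    by_cases h : e₀ ∈ D
    · simp only [hΦ, if_pos h]
      exact (Finset.erase_subset _ _).trans hD
    · simp only [hΦ, if_neg h]
      exact Finset.insert_subset h0 hD
  have hbij : (E0.powerset.filter (fun D => (L.countP (· ∈ D)) % 2 = 1)).card
      = (E0.powerset.filter (fun D => ¬((L.countP (· ∈ D)) % 2 = 1))).card := by
    apply Finset.card_bij' (fun D _ => Φ D) (fun D _ => Φ D)
    · intro D hD
      rw [Finset.mem_filter] at hD ⊢
      refine ⟨hΦmem D hD.1, ?_⟩
      rw [hflip D, hD.2]
      omega
    · intro D hD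
      rw [Finset.mem_filter] at hD ⊢
      refine ⟨hΦmem D hD.1, ?_⟩
      rw [hflip D]
      have := hD.2
      omega
    · intro D _; exact hΦinv D
    · intro D _; exact hΦinv D
  have hsplit := Finset.card_filter_add_card_filter_not
    (s := E0.powerset) (p := fun D => (L.countP (· ∈ D)) % 2 = 1)
  rw [Finset.card_powerset] at hsplit
  have hn0 : 1 ≤ E0.card := Finset.card_pos.mpr ⟨e₀, h0⟩
  have hpow : 2 ^ E0.card = 2 * 2 ^ (E0.card - 1) := by
    conv_lhs => rw [show E0.card = (E0.card - 1) + 1 by omega]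
    rw [pow_succ]; ring
  omega


/-- a set `Q` of pairwise `T₁`-leg-disjoint incompatible quartets gives
`d_MP^t(T₁,T₂) ≥ |Q| / 27`, for every `t ≥ 2` (including `t = ⊤`). -/
theorem dMP_ge_legDisjoint_quartets
    {X : Type} [Fintype X] (T1 T2 : PTree X)
    (Q : Finset (X × X × X × X))
    (hQ : ∀ q ∈ Q, IncompatQuartet T1 T2 q)
    (hld : ∀ q1 ∈ Q, ∀ q2 ∈ Q, q1 ≠ q2 → qlegs T1 q1 ∩ qlegs T1 q2 = ∅)
    (t : ℕ∞) (ht : 2 ≤ t) :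
    Q.card ≤ 27 * dMP t T1 T2 := by
  classical
  obtain ⟨r⟩ : Nonempty T2.V := T2.isTree.isConnected.nonempty
  set k := Q.card with hk
  -- Step 1: for each quartet, the T2-paths of the two pairs share an edge.
  have hshared : ∀ q : X × X × X × X, ∃ e : Sym2 T2.V, q ∈ Q →
      (e ∈ (T2.pth (T2.leaf q.1) (T2.leaf q.2.1)).edges ∧
       e ∈ (T2.pth (T2.leaf q.2.2.1) (T2.leaf q.2.2.2)).edges) := by
    intro q
    by_cases hq' : q ∈ Q
    · obtain ⟨hdist, hdisp, hncomp⟩ := hQ q hq'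
      obtain ⟨hab, hac, had, hbc, hbd, hcd⟩ := hdist
      have hvert : (T2.pathSet (T2.leaf q.1) (T2.leaf q.2.1) ∩
          T2.pathSet (T2.leaf q.2.2.1) (T2.leaf q.2.2.2)).Nonempty := by
        by_cases hd2 : displays T2 q.1 q.2.1 q.2.2.1 q.2.2.2
        · exfalso
          apply hncomp
          refine ⟨⟨fun _ => hd2, fun _ => hdisp⟩, ?_, ?_⟩
          · constructor
            · intro h1
              exfalso
              obtain ⟨w, hw⟩ := PTree.cross_nonempty (T := T1) hdisp
              exact Set.eq_empty_iff_forall_notMem.mp h1 w hw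
            · intro h2
              exfalso
              obtain ⟨w, hw⟩ := PTree.cross_nonempty (T := T2) hd2
              exact Set.eq_empty_iff_forall_notMem.mp h2 w hw
          · constructor
            · intro h1
              exfalso
              have hdisp' : T1.pathSet (T1.leaf q.1) (T1.leaf q.2.1) ∩
                  T1.pathSet (T1.leaf q.2.2.2) (T1.leaf q.2.2.1) = ∅ := by
                rw [PTree.pathSet_comm (u := T1.leaf q.2.2.2)]
                exact hdisp
              obtain ⟨w, hw⟩ := PTree.cross_nonempty (T := T1) hdisp'
              exact Set.eq_empty_iff_forall_notMem.mp h1 w hw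
            · intro h2
              exfalso
              have hd2' : T2.pathSet (T2.leaf q.1) (T2.leaf q.2.1) ∩
                  T2.pathSet (T2.leaf q.2.2.2) (T2.leaf q.2.2.1) = ∅ := by
                rw [PTree.pathSet_comm (u := T2.leaf q.2.2.2)]
                exact hd2
              obtain ⟨w, hw⟩ := PTree.cross_nonempty (T := T2) hd2'
              exact Set.eq_empty_iff_forall_notMem.mp h2 w hw
        · rw [displays] at hd2
          exact Set.nonempty_iff_ne_empty.mpr hd2
      exact (PTree.exists_shared_edge T2 hab hac had hbc hbd hcd hvert).imp
        (fun e he _ => he)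
    · exact ⟨s(r, r), fun h => absurd h hq'⟩
  choose esel hesel using hshared
  set E0 : Finset (Sym2 T2.V) := Q.image esel with hE0
  set n0 := E0.card with hn0
  have hn0k : n0 ≤ k := by
    rw [hn0, hE0, hk]; exact Finset.card_image_le
  -- the character attached to D ⊆ E0
  set chr : Finset (Sym2 T2.V) → X → ℕ :=
    fun D x => PTree.cntD (T := T2) D r (T2.leaf x) % 2 with hchr
  -- bichromaticity criterion
  have hcrit : ∀ (D : Finset (Sym2 T2.V)) (x y : X), (chr D x ≠ chr D y) ↔
      ((T2.pth (T2.leaf x) (T2.leaf y)).edges.countP (· ∈ D)) % 2 = 1 := by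
    intro D x y
    have := PTree.cntD_walk (T := T2) D r (T2.pth (T2.leaf x) (T2.leaf y))
    have h1 : chr D x = PTree.cntD (T := T2) D r (T2.leaf x) % 2 := rfl
    have h2 : chr D y = PTree.cntD (T := T2) D r (T2.leaf y) % 2 := rfl
    rw [h1, h2]
    omega
  -- pairs
  set Z : Finset ((X × X × X × X) × Bool) := Q ×ˢ (Finset.univ : Finset Bool) with hZ
  set pairfun : (X × X × X × X) × Bool → X × X :=
    fun z => if z.2 then (z.1.1, z.1.2.1) else (z.1.2.2.1, z.1.2.2.2) with hpairfun
  set m : Finset (Sym2 T2.V) → ℕ :=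
    fun D => (Z.filter (fun z => chr D (pairfun z).1 ≠ chr D (pairfun z).2)).card with hm
  -- LOWER bound for T1
  have hlower : ∀ D : Finset (Sym2 T2.V), m D ≤ T1.lscore (chr D) := by
    intro D
    apply PTree.le_lscore
    intro g hg
    apply PTree.le_mutCount_of_pairs
      (A := Z.filter (fun z => chr D (pairfun z).1 ≠ chr D (pairfun z).2))
      (xy := fun z => (T1.leaf (pairfun z).1, T1.leaf (pairfun z).2))
    · intro z hz
      rw [Finset.mem_filter] at hz
      simp only [hg]
      exact hz.2
    · intro z1 hz1 z2 hz2 hne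
      rw [Finset.mem_filter, hZ, Finset.mem_product] at hz1 hz2
      have hq1 : z1.1 ∈ Q := hz1.1.1
      have hq2 : z2.1 ∈ Q := hz2.1.1
      have hsub : ∀ (z : (X × X × X × X) × Bool), z.1 ∈ Q →
          T1.pathSet (T1.leaf (pairfun z).1) (T1.leaf (pairfun z).2) ⊆ qlegs T1 z.1 := by
        intro z hzQ
        rw [qlegs, legs]
        cases hzb : z.2
        · have hp : pairfun z = (z.1.2.2.1, z.1.2.2.2) := by simp [hpairfun, hzb]
          rw [hp]
          exact Set.subset_union_right
        · have hp : pairfun z = (z.1.1, z.1.2.1) := by simp [hpairfun, hzb]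
          rw [hp]
          exact Set.subset_union_left
      by_cases hqq : z1.1 = z2.1
      · -- same quartet, different sides
        have hbne : z1.2 ≠ z2.2 := by
          intro hbb
          exact hne (Prod.ext hqq hbb)
        obtain ⟨-, hdisp, -⟩ := hQ z1.1 hq1
        rw [displays] at hdisp
        cases hb1 : z1.2 <;> cases hb2 : z2.2
        · exact absurd (hb1.trans hb2.symm) hbne
        · -- z1 false, z2 true
          have hp1 : pairfun z1 = (z1.1.2.2.1, z1.1.2.2.2) := by simp [hpairfun, hb1]
          have hp2 : pairfun z2 = (z2.1.1, z2.1.2.1) := by simp [hpairfun, hb2]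
          rw [hqq] at hdisp
          rw [hp1, hp2, hqq, Set.inter_comm]
          exact hdisp
        · -- z1 true, z2 false
          have hp1 : pairfun z1 = (z1.1.1, z1.1.2.1) := by simp [hpairfun, hb1]
          have hp2 : pairfun z2 = (z2.1.2.2.1, z2.1.2.2.2) := by simp [hpairfun, hb2]
          rw [hqq] at hdisp
          rw [hp1, hp2, hqq]
          exact hdisp
        · exact absurd (hb1.trans hb2.symm) hbne
      · -- different quartets: leg-disjointness
        have hlegs := hld z1.1 hq1 z2.1 hq2 hqq
        apply Set.eq_empty_of_subset_empty
        calc T1.pathSet (T1.leaf (pairfun z1).1) (T1.leaf (pairfun z1).2) ∩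
            T1.pathSet (T1.leaf (pairfun z2).1) (T1.leaf (pairfun z2).2)
            ⊆ qlegs T1 z1.1 ∩ qlegs T1 z2.1 :=
              Set.inter_subset_inter (hsub z1 hq1) (hsub z2 hq2)
          _ = ∅ := hlegs
  -- UPPER bound for T2
  have hupper : ∀ D : Finset (Sym2 T2.V), T2.lscore (chr D) ≤ D.card := by
    intro D
    calc T2.lscore (chr D) ≤ T2.mutCount (fun v => PTree.cntD (T := T2) D r v % 2) :=
          PTree.lscore_le_mutCount _ (fun x => rfl)
      _ ≤ D.card := PTree.mutCount_parity_le D r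
  -- Counting over all D ⊆ E0
  set S : Finset (Finset (Sym2 T2.V)) := E0.powerset with hS
  have hsum1 : ∑ D ∈ S, m D = (2 * k) * 2 ^ (n0 - 1) := by
    have hstep : ∀ D ∈ S, m D = ∑ z ∈ Z, (if chr D (pairfun z).1 ≠ chr D (pairfun z).2 then 1 else 0) := by
      intro D _
      rw [hm]
      simp only []
      rw [Finset.card_filter]
    rw [Finset.sum_congr rfl hstep, Finset.sum_comm]
    have hz : ∀ z ∈ Z, ∑ D ∈ S, (if chr D (pairfun z).1 ≠ chr D (pairfun z).2 then 1 else 0)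
        = 2 ^ (n0 - 1) := by
      intro z hzZ
      rw [hZ, Finset.mem_product] at hzZ
      have hzQ : z.1 ∈ Q := hzZ.1
      rw [← Finset.card_filter]
      have he0 : esel z.1 ∈ E0 := by
        rw [hE0]; exact Finset.mem_image_of_mem _ hzQ
      have heL : esel z.1 ∈ (T2.pth (T2.leaf (pairfun z).1) (T2.leaf (pairfun z).2)).edges := by
        obtain ⟨h1, h2⟩ := hesel z.1 hzQ
        cases hzb : z.2
        · have hp : pairfun z = (z.1.2.2.1, z.1.2.2.2) := by simp [hpairfun, hzb]
          rw [hp]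
          exact h2
        · have hp : pairfun z = (z.1.1, z.1.2.1) := by simp [hpairfun, hzb]
          rw [hp]
          exact h1
      have hnodup : (T2.pth (T2.leaf (pairfun z).1) (T2.leaf (pairfun z).2)).edges.Nodup :=
        SimpleGraph.Walk.edges_nodup_of_support_nodup (PTree.pth_isPath _ _).support_nodup
      have := oddcount E0 (T2.pth (T2.leaf (pairfun z).1) (T2.leaf (pairfun z).2)).edges
        hnodup (esel z.1) he0 heL
      rw [← this]
      congr 1
      apply Finset.filter_congr
      intro D _
      exact hcrit D _ _
    rw [Finset.sum_congr rfl hz, Finset.sum_const, hZ]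
    rw [Finset.card_product]
    simp [hk]
    ring
  have hsum2 : ∑ D ∈ S, D.card = n0 * 2 ^ (n0 - 1) := by
    have hstep : ∀ D ∈ S, D.card = ∑ e ∈ E0, (if e ∈ D then 1 else 0) := by
      intro D hD
      rw [← Finset.card_filter]
      congr 1
      rw [Finset.filter_mem_eq_inter]
      exact (Finset.inter_eq_right.mpr (Finset.mem_powerset.mp hD)).symm
      -- E0 ∩ D = D
    rw [Finset.sum_congr rfl hstep, Finset.sum_comm]
    have he : ∀ e ∈ E0, ∑ D ∈ S, (if e ∈ D then 1 else 0) = 2 ^ (n0 - 1) := by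
      intro e heE
      rw [← Finset.card_filter]
      have := oddcount E0 [e] (List.nodup_singleton e) e heE (List.mem_singleton_self e)
      rw [← this]
      congr 1
      apply Finset.filter_congr
      intro D _
      simp only [List.countP_singleton, eq_iff_iff, decide_eq_true_eq]
      by_cases h : e ∈ D <;> simp [h]
    rw [Finset.sum_congr rfl he, Finset.sum_const]
    simp [hn0]
  -- averaging
  have hSne : S.Nonempty := ⟨∅, Finset.empty_mem_powerset _⟩
  have havg : ∃ D ∈ S, k + 2 * D.card ≤ 2 * m D := by
    apply Finset.exists_le_of_sum_le hSne
    have hsum1' : ∑ D ∈ S, 2 * m D = 2 * ((2 * k) * 2 ^ (n0 - 1)) := by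
      rw [← Finset.mul_sum, hsum1]
    have hsumL : ∑ D ∈ S, (k + 2 * D.card) = 2 ^ n0 * k + 2 * (n0 * 2 ^ (n0 - 1)) := by
      rw [Finset.sum_add_distrib, Finset.sum_const, ← Finset.mul_sum, hsum2, hS,
        Finset.card_powerset]
      simp [smul_eq_mul, hn0]
    rw [hsumL, hsum1']
    by_cases h0 : n0 = 0
    · have hk0 : k = 0 := by
        by_contra hk0
        have hQne : Q.Nonempty := Finset.card_pos.mp (by omega)
        obtain ⟨q, hq'⟩ := hQne
        have hmem : esel q ∈ E0 := by rw [hE0]; exact Finset.mem_image_of_mem _ hq'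
        have := Finset.card_pos.mpr ⟨_, hmem⟩
        omega
      simp [h0, hk0]
    · have hpow : 2 ^ n0 = 2 * 2 ^ (n0 - 1) := by
        conv_lhs => rw [show n0 = (n0 - 1) + 1 by omega]
        rw [pow_succ]; ring
      rw [hpow]
      have hmul : n0 * 2 ^ (n0 - 1) ≤ k * 2 ^ (n0 - 1) :=
        Nat.mul_le_mul_right _ hn0k
      nlinarith [hmul]
  obtain ⟨D, hDS, hDle⟩ := havg
  -- conclude
  have hl1 := hlower D
  have hl2 := hupper D
  have himg : ((Finset.univ.image (chr D)).card : ℕ∞) ≤ t := by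
    have hsub : Finset.univ.image (chr D) ⊆ ({0, 1} : Finset ℕ) := by
      intro n hn
      rw [Finset.mem_image] at hn
      obtain ⟨x, -, rfl⟩ := hn
      rw [hchr]
      simp only [Finset.mem_insert, Finset.mem_singleton]
      omega
    have hcard : (Finset.univ.image (chr D)).card ≤ 2 := by
      calc (Finset.univ.image (chr D)).card ≤ ({0, 1} : Finset ℕ).card :=
            Finset.card_le_card hsub
        _ = 2 := rfl
    calc ((Finset.univ.image (chr D)).card : ℕ∞) ≤ (2 : ℕ∞) := by exact_mod_cast hcard
      _ ≤ t := ht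
  have hmem : Nat.dist (T1.lscore (chr D)) (T2.lscore (chr D)) ∈
      {n | ∃ f : X → ℕ, ((Finset.univ.image f).card : ℕ∞) ≤ t ∧
        n = Nat.dist (T1.lscore f) (T2.lscore f)} := ⟨chr D, himg, rfl⟩
  have hbdd : BddAbove {n | ∃ f : X → ℕ, ((Finset.univ.image f).card : ℕ∞) ≤ t ∧
      n = Nat.dist (T1.lscore f) (T2.lscore f)} := by
    refine ⟨T1.G.edgeSet.ncard + T2.G.edgeSet.ncard, ?_⟩
    rintro n ⟨f, -, rfl⟩
    have hb1 : T1.lscore f ≤ T1.G.edgeSet.ncard := by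
      calc T1.lscore f ≤ T1.mutCount (T1.extendChar f) :=
            PTree.lscore_le_mutCount _ (PTree.extendChar_leaf T1 f)
        _ ≤ T1.G.edgeSet.ncard :=
            Set.ncard_le_ncard (Set.sep_subset _ _) (Set.toFinite _)
    have hb2 : T2.lscore f ≤ T2.G.edgeSet.ncard := by
      calc T2.lscore f ≤ T2.mutCount (T2.extendChar f) :=
            PTree.lscore_le_mutCount _ (PTree.extendChar_leaf T2 f)
        _ ≤ T2.G.edgeSet.ncard :=
            Set.ncard_le_ncard (Set.sep_subset _ _) (Set.toFinite _)
    have : Nat.dist (T1.lscore f) (T2.lscore f) =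
        (T1.lscore f - T2.lscore f) + (T2.lscore f - T1.lscore f) := rfl
    omega
  have hsup : Nat.dist (T1.lscore (chr D)) (T2.lscore (chr D)) ≤ dMP t T1 T2 :=
    le_csSup hbdd hmem
  have hdist : Nat.dist (T1.lscore (chr D)) (T2.lscore (chr D)) =
      (T1.lscore (chr D) - T2.lscore (chr D)) + (T2.lscore (chr D) - T1.lscore (chr D)) := rfl
  omega
end

section
/- Let T₁, T₂ be trees on X, let Q be the set of incompatible quartets of (T₁,T₂), and suppose E' is a set of edges of T₁ such that for every q ∈ Q, E' contains at least one edge lying on a leg of q in T₁. Then cutting the edges of E' in T₁ yields an agreement forest of T₁ and T₂; in particular d_TBR(T₁,T₂) ≤ |E'|. -/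
open SimpleGraph

variable {X Y S : Type}

/-- The edges of `T` lying on a leg of the quartet `ab|cd`. -/
def legEdges {X : Type} (T : PTree X) (a b c d : X) : Set (Sym2 T.V) :=
  {e | e ∈ T.G.edgeSet ∧
    ((∀ v ∈ e, v ∈ T.pathSet (T.leaf a) (T.leaf b)) ∨
     (∀ v ∈ e, v ∈ T.pathSet (T.leaf c) (T.leaf d)))}


section TreeLemmas
set_option linter.unusedSectionVars false
variable {V : Type} [DecidableEq V] {G : SimpleGraph V}

lemma path_length_eq_dist (hG : G.IsTree) {u v : V} (p : G.Walk u v) (hp : p.IsPath) :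
    p.length = G.dist u v := by
  obtain ⟨q, hq, hlen⟩ := hG.isConnected.exists_path_of_dist u v
  have := (hG.existsUnique_path u v).unique hp hq
  rw [this, hlen]

lemma mem_support_dist (hG : G.IsTree) {u v w : V} (p : G.Walk u v) (hp : p.IsPath)
    (hw : w ∈ p.support) : G.dist u w + G.dist w v = G.dist u v := by
  have hsplit := p.take_spec hw
  have h1 : (p.takeUntil w hw).length = G.dist u w :=
    path_length_eq_dist hG _ (hp.takeUntil hw)
  have h2 : (p.dropUntil w hw).length = G.dist w v :=
    path_length_eq_dist hG _ (hp.dropUntil hw)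
  have h3 : G.dist u v = p.length := (path_length_eq_dist hG p hp).symm
  rw [h3, ← hsplit, SimpleGraph.Walk.length_append, h1, h2]

lemma dist_mem_support (hG : G.IsTree) {u v w : V} (p : G.Walk u v) (hp : p.IsPath)
    (hd : G.dist u w + G.dist w v = G.dist u v) : w ∈ p.support := by
  obtain ⟨q1, hq1, hl1⟩ := hG.isConnected.exists_path_of_dist u w
  obtain ⟨q2, hq2, hl2⟩ := hG.isConnected.exists_path_of_dist w v
  have hdisj : ∀ z, z ∈ q1.support → z ∈ q2.support → z = w := by
    intro z hz1 hz2
    have e1 := mem_support_dist hG q1 hq1 hz1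
    have e2 := mem_support_dist hG q2 hq2 hz2
    have tri : G.dist u v ≤ G.dist u z + G.dist z v := hG.isConnected.dist_triangle
    have hc : G.dist w z = G.dist z w := SimpleGraph.dist_comm ..
    have hz : G.dist z w = 0 := by omega
    exact ((hG.isConnected.dist_eq_zero_iff).mp hz)
  have hq : (q1.append q2).IsPath := by
    rw [SimpleGraph.Walk.isPath_def, SimpleGraph.Walk.support_append]
    refine List.Nodup.append hq1.support_nodup (hq2.support_nodup.sublist (List.tail_sublist _)) ?_
    intro z hz1 hz2
    have hz2' : z ∈ q2.support := List.mem_of_mem_tail hz2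
    have := hdisj z hz1 hz2'
    subst this
    have : q2.support = z :: q2.support.tail := by
      rw [← SimpleGraph.Walk.support_eq_cons]
    have hnd := hq2.support_nodup
    rw [this] at hnd
    exact (List.nodup_cons.mp hnd).1 hz2
  have := (hG.existsUnique_path u v).unique hp hq
  rw [this]
  rw [SimpleGraph.Walk.mem_support_append_iff]
  left; exact q1.end_mem_support

lemma single_edge_path (hG : G.IsTree) {a b : V} (h : G.Adj a b) (p : G.Walk a b)
    (hp : p.IsPath) : p = SimpleGraph.Walk.cons h SimpleGraph.Walk.nil := by
  have h2 : (SimpleGraph.Walk.cons h SimpleGraph.Walk.nil : G.Walk a b).IsPath := by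
    simp [h.ne]
  exact (hG.existsUnique_path a b).unique hp h2

lemma adj_mem_support_edge (hG : G.IsTree) {u v a b : V} (p : G.Walk u v) (hp : p.IsPath)
    (hab : G.Adj a b) (ha : a ∈ p.support) (hb : b ∈ p.support) : s(a, b) ∈ p.edges := by
  have hsplit := p.take_spec ha
  have hb' : b ∈ ((p.takeUntil a ha).append (p.dropUntil a ha)).support := by rw [hsplit]; exact hb
  rw [SimpleGraph.Walk.mem_support_append_iff] at hb'
  rcases hb' with hb1 | hb2
  · -- b in the first part, path u → a; dropUntil b gives path b → a
    have q := (p.takeUntil a ha).dropUntil b hb1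
    have hq : ((p.takeUntil a ha).dropUntil b hb1).IsPath := (hp.takeUntil ha).dropUntil hb1
    have := single_edge_path hG hab.symm _ hq
    have hedge : s(b, a) ∈ ((p.takeUntil a ha).dropUntil b hb1).edges := by
      rw [this]; simp
    have : s(b, a) ∈ p.edges :=
      (p.edges_takeUntil_subset ha) (SimpleGraph.Walk.edges_dropUntil_subset _ hb1 hedge)
    rwa [Sym2.eq_swap] at this
  · have hq : ((p.dropUntil a ha).takeUntil b hb2).IsPath := (hp.dropUntil ha).takeUntil hb2
    have := single_edge_path hG hab _ hq
    have hedge : s(a, b) ∈ ((p.dropUntil a ha).takeUntil b hb2).edges := by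
      rw [this]; simp
    exact (p.edges_dropUntil_subset ha) (SimpleGraph.Walk.edges_takeUntil_subset _ hb2 hedge)

/-- Every walk between two vertices of a tree contains all edges of the unique path. -/
lemma path_edges_subset_walk_edges (hG : G.IsTree) {u v : V} (W : G.Walk u v)
    (p : G.Walk u v) (hp : p.IsPath) : ∀ e ∈ p.edges, e ∈ W.edges := by
  induction W with
  | nil =>
    have : p = SimpleGraph.Walk.nil :=
      (hG.existsUnique_path _ _).unique hp (SimpleGraph.Walk.IsPath.nil)
    subst this; simp
  | @cons x z y h W' ih =>
    by_cases hz : z ∈ p.support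
    · have hsplit := p.take_spec hz
      have htake : p.takeUntil z hz = SimpleGraph.Walk.cons h SimpleGraph.Walk.nil :=
        single_edge_path hG h _ (hp.takeUntil hz)
      intro e he
      rw [← hsplit, SimpleGraph.Walk.edges_append, htake] at he
      simp only [SimpleGraph.Walk.edges_cons, SimpleGraph.Walk.edges_nil] at he
      rcases List.mem_append.mp he with he1 | he2
      · simp only [List.mem_singleton] at he1
        subst he1; simp
      · have := ih _ (hp.dropUntil hz) _ he2
        simp [this]
    · have hq : (SimpleGraph.Walk.cons h.symm p).IsPath := by
        rw [SimpleGraph.Walk.cons_isPath_iff]; exact ⟨hp, hz⟩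
      intro e he
      have := ih _ hq e (by simp [he])
      simp [this]
end TreeLemmas



section Count
variable {V : Type} [Fintype V] [DecidableEq V]

lemma walk_reach_delete {H : SimpleGraph V} {u v x y : V} (W : H.Walk x y) :
    (H.deleteEdges {s(u,v)}).Reachable x y ∨ (H.deleteEdges {s(u,v)}).Reachable x u ∨
      (H.deleteEdges {s(u,v)}).Reachable x v := by
  induction W with
  | nil => exact Or.inl (Reachable.refl _)
  | @cons a b c h W' ih =>
    by_cases he : s(a, b) = s(u, v)
    · rw [Sym2.eq_iff] at he
      rcases he with ⟨rfl, rfl⟩ | ⟨rfl, rfl⟩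
      · exact Or.inr (Or.inl (Reachable.refl _))
      · exact Or.inr (Or.inr (Reachable.refl _))
    · have hadj : (H.deleteEdges {s(u,v)}).Adj a b := by
        rw [SimpleGraph.deleteEdges_adj]; exact ⟨h, by simpa using he⟩
      rcases ih with h1 | h1 | h1
      · exact Or.inl (hadj.reachable.trans h1)
      · exact Or.inr (Or.inl (hadj.reachable.trans h1))
      · exact Or.inr (Or.inr (hadj.reachable.trans h1))

lemma card_cc_deleteEdge_le (H : SimpleGraph V) (e : Sym2 V) :
    Nat.card (H.deleteEdges {e}).ConnectedComponent ≤ Nat.card H.ConnectedComponent + 1 := by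
  classical
  induction e using Sym2.ind with | _ u v =>
  set D := H.deleteEdges {s(u,v)} with hD
  have hle : D ≤ H := SimpleGraph.deleteEdges_le _
  let φ := SimpleGraph.Hom.ofLE hle
  let g : D.ConnectedComponent → H.ConnectedComponent ⊕ Unit := fun C =>
    if C = D.connectedComponentMk v then Sum.inr () else Sum.inl (C.map φ)
  have hg : Function.Injective g := by
    intro C C' hCC
    by_cases h1 : C = D.connectedComponentMk v <;>
      by_cases h2 : C' = D.connectedComponentMk v
    · rw [h1, h2]
    · simp only [g, if_pos h1, if_neg h2] at hCC; exact absurd hCC (by simp)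
    · simp only [g, if_neg h1, if_pos h2] at hCC; exact absurd hCC (by simp)
    · simp only [g, if_neg h1, if_neg h2, Sum.inl.injEq] at hCC
      obtain ⟨x, rfl⟩ := C.exists_rep
      obtain ⟨y, rfl⟩ := C'.exists_rep
      have hmap : H.connectedComponentMk x = H.connectedComponentMk y := by
        have h := hCC
        rw [show (Quot.mk D.Reachable x) = D.connectedComponentMk x from rfl,
          show (Quot.mk D.Reachable y) = D.connectedComponentMk y from rfl,
          SimpleGraph.ConnectedComponent.map_mk, SimpleGraph.ConnectedComponent.map_mk] at h
        exact h
      have hreach : H.Reachable x y := SimpleGraph.ConnectedComponent.eq.mp hmap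
      obtain ⟨W⟩ := hreach
      rcases walk_reach_delete W with hxy | hxu | hxv
      · exact SimpleGraph.ConnectedComponent.sound hxy
      · rcases walk_reach_delete W.reverse with hyx | hyu | hyv
        · exact SimpleGraph.ConnectedComponent.sound hyx.symm
        · exact SimpleGraph.ConnectedComponent.sound (hxu.trans hyu.symm)
        · exact absurd (SimpleGraph.ConnectedComponent.sound hyv) h2
      · exact absurd (SimpleGraph.ConnectedComponent.sound hxv) h1
  calc Nat.card D.ConnectedComponent
      ≤ Nat.card (H.ConnectedComponent ⊕ Unit) := Nat.card_le_card_of_injective g hg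
    _ = Nat.card H.ConnectedComponent + 1 := by rw [Nat.card_sum]; simp

lemma card_cc_deleteEdges_le (G : SimpleGraph V) (hG : G.Connected) (s : Finset (Sym2 V)) :
    Nat.card (G.deleteEdges ↑s).ConnectedComponent ≤ s.card + 1 := by
  classical
  induction s using Finset.induction_on with
  | empty =>
    rw [Finset.coe_empty, SimpleGraph.deleteEdges_empty]
    have hsub : Subsingleton G.ConnectedComponent := ⟨fun a b => by
      obtain ⟨x, rfl⟩ := a.exists_rep
      obtain ⟨y, rfl⟩ := b.exists_rep
      exact SimpleGraph.ConnectedComponent.sound (hG.preconnected x y)⟩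
    have hne : Nonempty G.ConnectedComponent := by
      have : Nonempty V := hG.nonempty
      exact ⟨G.connectedComponentMk Classical.ofNonempty⟩
    have h1 : Nat.card G.ConnectedComponent = 1 := Nat.card_eq_one_iff_unique.mpr ⟨hsub, hne⟩
    simp only [Finset.card_empty]
    omega
  | @insert a s ha ih =>
    have heq : G.deleteEdges ↑(insert a s) = (G.deleteEdges ↑s).deleteEdges {a} := by
      rw [SimpleGraph.deleteEdges_deleteEdges]
      congr 1
      rw [Finset.coe_insert]
      ext e; simp [or_comm]
    rw [heq, Finset.card_insert_of_notMem ha]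
    calc Nat.card ((G.deleteEdges ↑s).deleteEdges {a}).ConnectedComponent
        ≤ Nat.card (G.deleteEdges ↑s).ConnectedComponent + 1 := card_cc_deleteEdge_le _ _
      _ ≤ s.card + 1 + 1 := by omega

end Count
section PTreeLemmas
variable {X : Type} (T : PTree X)

lemma PTree.conn : T.G.Connected := T.isTree.isConnected

lemma mem_pathSet_iff (u v w : T.V) :
    w ∈ T.pathSet u v ↔ T.G.dist u w + T.G.dist w v = T.G.dist u v := Iff.rfl

lemma pathSet_self (u : T.V) : T.pathSet u u = {u} := by
  ext w
  rw [mem_pathSet_iff, Set.mem_singleton_iff]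
  constructor
  · intro h
    have hs : T.G.dist u u = 0 := SimpleGraph.dist_self ..
    have hc : T.G.dist u w = T.G.dist w u := SimpleGraph.dist_comm ..
    have h0 : T.G.dist u w = 0 := by omega
    exact ((T.conn.dist_eq_zero_iff).mp h0).symm
  · rintro rfl; simp

lemma mem_pathSet_left (u v : T.V) : u ∈ T.pathSet u v := by
  rw [mem_pathSet_iff]; simp

lemma mem_pathSet_right (u v : T.V) : v ∈ T.pathSet u v := by
  rw [mem_pathSet_iff]; simp

lemma pathSet_comm (u v : T.V) : T.pathSet u v = T.pathSet v u := by
  ext w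
  rw [mem_pathSet_iff, mem_pathSet_iff, SimpleGraph.dist_comm (u := u) (v := w),
    SimpleGraph.dist_comm (u := w) (v := v), SimpleGraph.dist_comm (u := u) (v := v)]
  omega

lemma displays_swap_right (a b c d : X) : displays T a b c d ↔ displays T a b d c := by
  unfold displays
  rw [pathSet_comm T (T.leaf c) (T.leaf d)]

lemma mem_pathSet_support {u v : T.V} (p : T.G.Walk u v) (hp : p.IsPath) (w : T.V) :
    w ∈ T.pathSet u v ↔ w ∈ p.support := by
  rw [mem_pathSet_iff]
  exact ⟨fun h => dist_mem_support T.isTree p hp h, fun h => mem_support_dist T.isTree p hp h⟩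

lemma exists_adj_toward {u v : T.V} (hne : u ≠ v) :
    ∃ z, T.G.Adj u z ∧ T.G.dist z v + 1 = T.G.dist u v := by
  obtain ⟨p, hp, hl⟩ := T.conn.exists_path_of_dist u v
  cases p with
  | nil => exact absurd rfl hne
  | @cons _ z _ h q =>
    refine ⟨z, h, ?_⟩
    have h1 : T.G.dist z v ≤ q.length := SimpleGraph.dist_le q
    have h2 : T.G.dist u z ≤ 1 := by
      have := SimpleGraph.dist_le (SimpleGraph.Walk.cons h SimpleGraph.Walk.nil)
      simpa using this
    have h3 : T.G.dist u v ≤ T.G.dist u z + T.G.dist z v := T.conn.dist_triangle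
    simp only [SimpleGraph.Walk.length_cons] at hl
    omega

lemma leaf_notmem_pathSet {a c d : X} (hac : a ≠ c) (had : a ≠ d) (hcd : c ≠ d) :
    T.leaf a ∉ T.pathSet (T.leaf c) (T.leaf d) := by
  intro hmem
  rw [mem_pathSet_iff] at hmem
  have h1 : T.leaf a ≠ T.leaf c := fun h => hac (T.leaf_inj h)
  have h2 : T.leaf a ≠ T.leaf d := fun h => had (T.leaf_inj h)
  have p1 : 0 < T.G.dist (T.leaf a) (T.leaf c) := T.conn.pos_dist_of_ne h1
  have p2 : 0 < T.G.dist (T.leaf a) (T.leaf d) := T.conn.pos_dist_of_ne h2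
  obtain ⟨z1, hz1, hd1⟩ := exists_adj_toward T h1
  obtain ⟨z2, hz2, hd2⟩ := exists_adj_toward T h2
  have hne : z1 ≠ z2 := by
    rintro rfl
    have tri : T.G.dist (T.leaf c) (T.leaf d) ≤
        T.G.dist (T.leaf c) z1 + T.G.dist z1 (T.leaf d) := T.conn.dist_triangle
    have c1 : T.G.dist (T.leaf c) z1 = T.G.dist z1 (T.leaf c) := SimpleGraph.dist_comm ..
    have c2 : T.G.dist (T.leaf c) (T.leaf a) = T.G.dist (T.leaf a) (T.leaf c) :=
      SimpleGraph.dist_comm ..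
    omega
  have hsub : ({z1, z2} : Finset T.V) ⊆ T.G.neighborFinset (T.leaf a) := by
    intro z hz
    rw [Finset.mem_insert, Finset.mem_singleton] at hz
    rw [SimpleGraph.mem_neighborFinset]
    rcases hz with rfl | rfl
    · exact hz1
    · exact hz2
  have hcard : 2 ≤ T.G.degree (T.leaf a) := by
    have := Finset.card_le_card hsub
    rwa [Finset.card_insert_of_notMem (by simpa using hne), Finset.card_singleton] at this
  have := T.leaf_deg a
  omega
end PTreeLemmas
section PartD
variable {X : Type} (T : PTree X)

lemma exists_displayed {a b c d : X} (h : QDistinct a b c d) :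
    displays T a b c d ∨ displays T a c b d ∨ displays T a d b c := by
  obtain ⟨hab, hac, had, hbc, hbd, hcd⟩ := h
  by_contra hno
  push_neg at hno
  obtain ⟨h1, h2, h3⟩ := hno
  unfold displays at h1 h2 h3
  obtain ⟨u, hu1, hu2⟩ := Set.nonempty_iff_ne_empty.mpr h1
  obtain ⟨v, hv1, hv2⟩ := Set.nonempty_iff_ne_empty.mpr h2
  obtain ⟨w, hw1, hw2⟩ := Set.nonempty_iff_ne_empty.mpr h3
  set la := T.leaf a with hla
  set lb := T.leaf b with hlb
  set lc := T.leaf c with hlc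
  set ld := T.leaf d with hld
  have conn := T.conn
  have m1 : T.G.dist la u + T.G.dist u lb = T.G.dist la lb := hu1
  have m2 : T.G.dist lc u + T.G.dist u ld = T.G.dist lc ld := hu2
  have m3 : T.G.dist la v + T.G.dist v lc = T.G.dist la lc := hv1
  have m4 : T.G.dist lb v + T.G.dist v ld = T.G.dist lb ld := hv2
  have m5 : T.G.dist la w + T.G.dist w ld = T.G.dist la ld := hw1
  have m6 : T.G.dist lb w + T.G.dist w lc = T.G.dist lb lc := hw2
  have t1 : T.G.dist la lc ≤ T.G.dist la u + T.G.dist u lc := conn.dist_triangle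
  have t2 : T.G.dist lb ld ≤ T.G.dist lb u + T.G.dist u ld := conn.dist_triangle
  have t3 : T.G.dist la ld ≤ T.G.dist la u + T.G.dist u ld := conn.dist_triangle
  have t4 : T.G.dist lb lc ≤ T.G.dist lb u + T.G.dist u lc := conn.dist_triangle
  have t5 : T.G.dist la lb ≤ T.G.dist la v + T.G.dist v lb := conn.dist_triangle
  have t6 : T.G.dist lc ld ≤ T.G.dist lc v + T.G.dist v ld := conn.dist_triangle
  have t7 : T.G.dist la lb ≤ T.G.dist la w + T.G.dist w lb := conn.dist_triangle
  have t8 : T.G.dist lc ld ≤ T.G.dist lc w + T.G.dist w ld := conn.dist_triangle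
  have cu1 : T.G.dist u la = T.G.dist la u := SimpleGraph.dist_comm ..
  have cu2 : T.G.dist u lb = T.G.dist lb u := SimpleGraph.dist_comm ..
  have cu3 : T.G.dist u lc = T.G.dist lc u := SimpleGraph.dist_comm ..
  have cu4 : T.G.dist u ld = T.G.dist ld u := SimpleGraph.dist_comm ..
  have cv1 : T.G.dist v la = T.G.dist la v := SimpleGraph.dist_comm ..
  have cv2 : T.G.dist v lb = T.G.dist lb v := SimpleGraph.dist_comm ..
  have cv3 : T.G.dist v lc = T.G.dist lc v := SimpleGraph.dist_comm ..
  have cv4 : T.G.dist v ld = T.G.dist ld v := SimpleGraph.dist_comm ..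
  have cw1 : T.G.dist w la = T.G.dist la w := SimpleGraph.dist_comm ..
  have cw2 : T.G.dist w lb = T.G.dist lb w := SimpleGraph.dist_comm ..
  have cw3 : T.G.dist w lc = T.G.dist lc w := SimpleGraph.dist_comm ..
  have cw4 : T.G.dist w ld = T.G.dist ld w := SimpleGraph.dist_comm ..
  have e1 : T.G.dist la u + T.G.dist u lc = T.G.dist la lc := by omega
  have e2 : T.G.dist lb u + T.G.dist u ld = T.G.dist lb ld := by omega
  have e3 : T.G.dist la u + T.G.dist u ld = T.G.dist la ld := by omega
  have e4 : T.G.dist lb u + T.G.dist u lc = T.G.dist lb lc := by omega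
  -- u is not a leaf vertex
  have hua : u ≠ la := by
    rintro rfl
    exact leaf_notmem_pathSet T hac had hcd hu2
  have hub : u ≠ lb := by
    rintro rfl
    exact leaf_notmem_pathSet T hbc hbd hcd hu2
  have huc : u ≠ lc := by
    rintro rfl
    exact leaf_notmem_pathSet T (Ne.symm hac) (Ne.symm hbc) hab hu1
  have hud : u ≠ ld := by
    rintro rfl
    exact leaf_notmem_pathSet T (Ne.symm had) (Ne.symm hbd) hab hu1
  have pa : 0 < T.G.dist u la := conn.pos_dist_of_ne hua
  have pb : 0 < T.G.dist u lb := conn.pos_dist_of_ne hub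
  have pc : 0 < T.G.dist u lc := conn.pos_dist_of_ne huc
  have pd : 0 < T.G.dist u ld := conn.pos_dist_of_ne hud
  obtain ⟨na, hna, hda⟩ := exists_adj_toward T hua
  obtain ⟨nb, hnb, hdb⟩ := exists_adj_toward T hub
  obtain ⟨nc, hnc, hdc⟩ := exists_adj_toward T huc
  obtain ⟨nd, hnd, hdd⟩ := exists_adj_toward T hud
  have key : ∀ (z : T.V) (l1 l2 : T.V), T.G.dist z l1 + 1 = T.G.dist u l1 →
      T.G.dist z l2 + 1 = T.G.dist u l2 →
      T.G.dist l1 u + T.G.dist u l2 = T.G.dist l1 l2 → False := by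
    intro z l1 l2 hz1 hz2 hsum
    have tri : T.G.dist l1 l2 ≤ T.G.dist l1 z + T.G.dist z l2 := conn.dist_triangle
    have c1 : T.G.dist l1 z = T.G.dist z l1 := SimpleGraph.dist_comm ..
    have c2 : T.G.dist l1 u = T.G.dist u l1 := SimpleGraph.dist_comm ..
    omega
  have hab' : na ≠ nb := fun hEq => key na la lb hda (hEq ▸ hdb) (by omega)
  have hac' : na ≠ nc := fun hEq => key na la lc hda (hEq ▸ hdc) (by omega)
  have had' : na ≠ nd := fun hEq => key na la ld hda (hEq ▸ hdd) (by omega)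
  have hbc' : nb ≠ nc := fun hEq => key nb lb lc hdb (hEq ▸ hdc) (by omega)
  have hbd' : nb ≠ nd := fun hEq => key nb lb ld hdb (hEq ▸ hdd) (by omega)
  have hcd' : nc ≠ nd := fun hEq => key nc lc ld hdc (hEq ▸ hdd) (by omega)
  have hsub : ({na, nb, nc, nd} : Finset T.V) ⊆ T.G.neighborFinset u := by
    intro z hz
    simp only [Finset.mem_insert, Finset.mem_singleton] at hz
    rw [SimpleGraph.mem_neighborFinset]
    rcases hz with rfl | rfl | rfl | rfl
    · exact hna
    · exact hnb
    · exact hnc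
    · exact hnd
  have hcard4 : ({na, nb, nc, nd} : Finset T.V).card = 4 := by
    rw [Finset.card_insert_of_notMem (by simp [hab', hac', had']),
      Finset.card_insert_of_notMem (by simp [hbc', hbd']),
      Finset.card_insert_of_notMem (by simp [hcd']), Finset.card_singleton]
  have hdeg : 4 ≤ T.G.degree u := by
    have := Finset.card_le_card hsub
    rwa [hcard4] at this
  have := T.max_deg u
  omega

lemma notmem_pathSet_of_ne {p r s : X} (hpr : p ≠ r) (hps : p ≠ s) :
    T.leaf p ∉ T.pathSet (T.leaf r) (T.leaf s) := by
  by_cases hrs : r = s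
  · subst hrs
    rw [pathSet_self, Set.mem_singleton_iff]
    exact fun h => hpr (T.leaf_inj h)
  · exact leaf_notmem_pathSet T hpr hps hrs

lemma displays_not_distinct (T1 T2 : PTree X) {p q r s : X} (h : ¬ QDistinct p q r s) :
    displays T1 p q r s ↔ displays T2 p q r s := by
  have key : ∀ T : PTree X, displays T p q r s ↔ (p ≠ r ∧ p ≠ s ∧ q ≠ r ∧ q ≠ s) := by
    intro T
    constructor
    · intro hd
      refine ⟨?_, ?_, ?_, ?_⟩
      · rintro rfl
        exact Set.eq_empty_iff_forall_notMem.mp hd (T.leaf p)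
          ⟨mem_pathSet_left T _ _, mem_pathSet_left T _ _⟩
      · rintro rfl
        exact Set.eq_empty_iff_forall_notMem.mp hd (T.leaf p)
          ⟨mem_pathSet_left T _ _, mem_pathSet_right T _ _⟩
      · rintro rfl
        exact Set.eq_empty_iff_forall_notMem.mp hd (T.leaf q)
          ⟨mem_pathSet_right T _ _, mem_pathSet_left T _ _⟩
      · rintro rfl
        exact Set.eq_empty_iff_forall_notMem.mp hd (T.leaf q)
          ⟨mem_pathSet_right T _ _, mem_pathSet_right T _ _⟩
    · rintro ⟨h1, h2, h3, h4⟩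
      have hpq_or : p = q ∨ r = s := by
        unfold QDistinct at h
        tauto
      unfold displays
      rcases hpq_or with rfl | rfl
      · rw [pathSet_self, Set.singleton_inter_eq_empty]
        exact notmem_pathSet_of_ne T h1 h2
      · rw [pathSet_self (u := T.leaf r), Set.inter_singleton_eq_empty]
        exact notmem_pathSet_of_ne T (Ne.symm h1) (Ne.symm h3)
  rw [key T1, key T2]

lemma tree_path_edges_not_cut (E' : Finset (Sym2 T.V))
    {x y : T.V} (hr : (T.G.deleteEdges ↑E').Reachable x y)
    (p : T.G.Walk x y) (hp : p.IsPath) : ∀ e ∈ p.edges, e ∉ E' := by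
  obtain ⟨W⟩ := hr
  have hW : ∀ e ∈ W.edges, e ∈ T.G.edgeSet ∧ e ∉ (↑E' : Set (Sym2 T.V)) := by
    intro e he
    have := W.edges_subset_edgeSet he
    rwa [SimpleGraph.edgeSet_deleteEdges] at this
  intro e he hemem
  have hsub := path_edges_subset_walk_edges T.isTree
    (W.transfer T.G (fun e he => (hW e he).1)) p hp
  have heW : e ∈ W.edges := by
    have := hsub e he
    rwa [SimpleGraph.Walk.edges_transfer] at this
  exact (hW e heW).2 (Finset.mem_coe.mpr hemem)

lemma reach_of_mem_pathSet (E' : Finset (Sym2 T.V))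
    {x y : T.V} (hr : (T.G.deleteEdges ↑E').Reachable x y)
    {w : T.V} (hw : w ∈ T.pathSet x y) : (T.G.deleteEdges ↑E').Reachable x w := by
  obtain ⟨p, hp, -⟩ := (T.isTree.existsUnique_path x y)
  have hcut := tree_path_edges_not_cut T E' hr p hp
  have hp' : ∀ e ∈ p.edges, e ∉ (↑E' : Set (Sym2 T.V)) :=
    fun e he => fun hmem => hcut e he (Finset.mem_coe.mp hmem)
  have hsupp : w ∈ (p.toDeleteEdges (↑E' : Set (Sym2 T.V)) hp').support := by
    rw [SimpleGraph.Walk.support_transfer]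
    exact (mem_pathSet_support T p hp w).mp hw
  exact ⟨(p.toDeleteEdges (↑E' : Set (Sym2 T.V)) hp').takeUntil w hsupp⟩

lemma edge_cut_not_on_path (E' : Finset (Sym2 T.V)) (hE : ↑E' ⊆ T.G.edgeSet)
    {x y : T.V} (hr : (T.G.deleteEdges ↑E').Reachable x y) {e : Sym2 T.V} (he : e ∈ E')
    (hend : ∀ v ∈ e, v ∈ T.pathSet x y) : False := by
  obtain ⟨p, hp, -⟩ := (T.isTree.existsUnique_path x y)
  have heG : e ∈ T.G.edgeSet := hE (Finset.mem_coe.mpr he)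
  revert hend heG he
  induction e using Sym2.ind with | _ a b =>
  intro he hend heG
  have hadj : T.G.Adj a b := T.G.mem_edgeSet.mp heG
  have ha : a ∈ p.support := (mem_pathSet_support T p hp a).mp (hend a (Sym2.mem_mk_left a b))
  have hb : b ∈ p.support := (mem_pathSet_support T p hp b).mp (hend b (Sym2.mem_mk_right a b))
  exact tree_path_edges_not_cut T E' hr p hp _
    (adj_mem_support_edge T.isTree p hp hadj ha hb) he

lemma qdistinct_perm1 {p q r s : X} (h : QDistinct p q r s) : QDistinct p r q s :=
  ⟨h.2.1, h.1, h.2.2.1, Ne.symm h.2.2.2.1, h.2.2.2.2.2, h.2.2.2.2.1⟩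

lemma qdistinct_perm2 {p q r s : X} (h : QDistinct p q r s) : QDistinct p s q r :=
  ⟨h.2.2.1, h.1, h.2.1, Ne.symm h.2.2.2.2.1, Ne.symm h.2.2.2.2.2, h.2.2.2.1⟩

end PartD
section PartE
variable {X : Type} [Fintype X] [DecidableEq X]

lemma master_iff (T1 T2 : PTree X) (E' : Finset (Sym2 T1.V)) (hE : ↑E' ⊆ T1.G.edgeSet)
    (hhit : ∀ a b c d : X, QDistinct a b c d → displays T1 a b c d →
      ¬ Compatible T1 T2 a b c d → ∃ e ∈ E', e ∈ legEdges T1 a b c d)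
    {p q r s : X}
    (hpq : (T1.G.deleteEdges ↑E').Reachable (T1.leaf p) (T1.leaf q))
    (hpr : (T1.G.deleteEdges ↑E').Reachable (T1.leaf p) (T1.leaf r))
    (hps : (T1.G.deleteEdges ↑E').Reachable (T1.leaf p) (T1.leaf s)) :
    displays T1 p q r s ↔ displays T2 p q r s := by
  have hrs : (T1.G.deleteEdges ↑E').Reachable (T1.leaf r) (T1.leaf s) := hpr.symm.trans hps
  have hqs : (T1.G.deleteEdges ↑E').Reachable (T1.leaf q) (T1.leaf s) := hpq.symm.trans hps
  have hqr : (T1.G.deleteEdges ↑E').Reachable (T1.leaf q) (T1.leaf r) := hpq.symm.trans hpr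
  by_cases hq : QDistinct p q r s
  · constructor
    · intro h1disp
      by_contra h2disp
      have hnc : ¬ Compatible T1 T2 p q r s := fun hc => h2disp (hc.1.mp h1disp)
      obtain ⟨e, he, -, hleg⟩ := hhit p q r s hq h1disp hnc
      rcases hleg with hleg | hleg
      · exact edge_cut_not_on_path T1 E' hE hpq he hleg
      · exact edge_cut_not_on_path T1 E' hE hrs he hleg
    · intro h2disp
      rcases exists_displayed T1 hq with hd | hd | hd
      · exact hd
      · by_cases hc : Compatible T1 T2 p r q s
        · exact hc.2.1.mpr h2disp
        · obtain ⟨e, he, -, hleg⟩ := hhit p r q s (qdistinct_perm1 hq) hd hc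
          rcases hleg with hleg | hleg
          · exact absurd (edge_cut_not_on_path T1 E' hE hpr he hleg) not_false
          · exact absurd (edge_cut_not_on_path T1 E' hE hqs he hleg) not_false
      · by_cases hc : Compatible T1 T2 p s q r
        · exact (displays_swap_right T1 p q s r).mp
            (hc.2.1.mpr ((displays_swap_right T2 p q r s).mp h2disp))
        · obtain ⟨e, he, -, hleg⟩ := hhit p s q r (qdistinct_perm2 hq) hd hc
          rcases hleg with hleg | hleg
          · exact absurd (edge_cut_not_on_path T1 E' hE hps he hleg) not_false
          · exact absurd (edge_cut_not_on_path T1 E' hE hqr he hleg) not_false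
  · exact displays_not_distinct T1 T2 hq

lemma compat_of_reach (T1 T2 : PTree X) (E' : Finset (Sym2 T1.V)) (hE : ↑E' ⊆ T1.G.edgeSet)
    (hhit : ∀ a b c d : X, QDistinct a b c d → displays T1 a b c d →
      ¬ Compatible T1 T2 a b c d → ∃ e ∈ E', e ∈ legEdges T1 a b c d)
    {a b c d : X}
    (hab : (T1.G.deleteEdges ↑E').Reachable (T1.leaf a) (T1.leaf b))
    (hac : (T1.G.deleteEdges ↑E').Reachable (T1.leaf a) (T1.leaf c))
    (had : (T1.G.deleteEdges ↑E').Reachable (T1.leaf a) (T1.leaf d)) :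
    Compatible T1 T2 a b c d :=
  ⟨master_iff T1 T2 E' hE hhit hab hac had,
   master_iff T1 T2 E' hE hhit hac hab had,
   master_iff T1 T2 E' hE hhit had hab hac⟩

end PartE
/-- if `E'` hits a leg of every incompatible quartet, then cutting `E'`
in `T₁` yields an agreement forest of `T₁, T₂`; in particular `d_TBR(T₁,T₂) ≤ |E'|`. -/
theorem hitting_set_gives_agreement_forest
    {X : Type} [Fintype X] [DecidableEq X] (T1 T2 : PTree X)
    (E' : Finset (Sym2 T1.V)) (hE : ↑E' ⊆ T1.G.edgeSet)
    (hhit : ∀ a b c d : X, QDistinct a b c d → displays T1 a b c d →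
      ¬ Compatible T1 T2 a b c d → ∃ e ∈ E', e ∈ legEdges T1 a b c d) :
    (∃ F : Finset (Finset X), AgreementForest T1 T2 F ∧ F.card ≤ E'.card + 1 ∧
      ∀ Yf ∈ F, ∀ x ∈ Yf, ∀ y ∈ Yf,
        (T1.G.deleteEdges ↑E').Reachable (T1.leaf x) (T1.leaf y)) ∧
    dTBR T1 T2 ≤ E'.card := by
  classical
  set D := T1.G.deleteEdges ↑E' with hD
  set block : X → Finset X := fun x =>
    Finset.univ.filter (fun y => D.Reachable (T1.leaf x) (T1.leaf y)) with hblock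
  have hmem_block : ∀ x y : X, y ∈ block x ↔ D.Reachable (T1.leaf x) (T1.leaf y) := by
    intro x y
    rw [hblock]
    simp only [Finset.mem_filter, Finset.mem_univ, true_and]
  have hself : ∀ x, x ∈ block x := fun x => (hmem_block x x).mpr (SimpleGraph.Reachable.refl _)
  have hblock_eq : ∀ x y, D.Reachable (T1.leaf x) (T1.leaf y) → block x = block y := by
    intro x y h
    ext z
    rw [hmem_block, hmem_block]
    exact ⟨fun hz => h.symm.trans hz, fun hz => h.trans hz⟩
  set F : Finset (Finset X) := Finset.univ.image block with hF
  have hFmem : ∀ B ∈ F, ∃ x, B = block x := by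
    intro B hB
    rw [hF, Finset.mem_image] at hB
    obtain ⟨x, -, hx⟩ := hB
    exact ⟨x, hx.symm⟩
  have hBx : ∀ B ∈ F, ∀ x ∈ B, B = block x := by
    intro B hB x hx
    obtain ⟨z, rfl⟩ := hFmem B hB
    exact hblock_eq z x ((hmem_block z x).mp hx)
  have hreach : ∀ B ∈ F, ∀ x ∈ B, ∀ y ∈ B, D.Reachable (T1.leaf x) (T1.leaf y) := by
    intro B hB x hx y hy
    obtain ⟨z, rfl⟩ := hFmem B hB
    exact ((hmem_block z x).mp hx).symm.trans ((hmem_block z y).mp hy)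
  have hpart : IsPartition F := by
    constructor
    · intro h0
      obtain ⟨x, hx⟩ := hFmem ∅ h0
      exact Finset.notMem_empty x (hx ▸ hself x)
    · intro x
      refine ⟨block x, ⟨Finset.mem_image_of_mem _ (Finset.mem_univ x), hself x⟩, ?_⟩
      rintro B ⟨hBF, hxB⟩
      exact hBx B hBF x hxB
  have hdisj1 : ∀ B ∈ F, ∀ B' ∈ F, B ≠ B' → ∀ x ∈ B, ∀ y ∈ B, ∀ u ∈ B', ∀ v ∈ B',
      T1.pathSet (T1.leaf x) (T1.leaf y) ∩ T1.pathSet (T1.leaf u) (T1.leaf v) = ∅ := by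
    intro B hB B' hB' hne x hx y hy u hu v hv
    rw [Set.eq_empty_iff_forall_notMem]
    rintro w ⟨hw1, hw2⟩
    have r1 : D.Reachable (T1.leaf x) w :=
      reach_of_mem_pathSet T1 E' (hreach B hB x hx y hy) hw1
    have r2 : D.Reachable (T1.leaf u) w :=
      reach_of_mem_pathSet T1 E' (hreach B' hB' u hu v hv) hw2
    have hbb : block x = block u := hblock_eq x u (r1.trans r2.symm)
    exact hne ((hBx B hB x hx).trans (hbb.trans (hBx B' hB' u hu).symm))
  have hAF : AgreementForest T1 T2 F := by
    refine ⟨hpart, ?_, ?_⟩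
    · intro B hB a b c d ha hb hc hd
      exact compat_of_reach T1 T2 E' hE hhit (hreach B hB a ha b hb) (hreach B hB a ha c hc)
        (hreach B hB a ha d hd)
    · intro B hB B' hB' hne
      constructor
      · rw [Set.eq_empty_iff_forall_notMem]
        intro e he
        obtain ⟨⟨he1, x, hx, y, hy, hexy⟩, he2, u, hu, v, hv, heuv⟩ := he
        obtain ⟨α, hα⟩ : ∃ w, w ∈ e := ⟨e.out.1, Sym2.out_fst_mem e⟩
        have hd12 := hdisj1 B hB B' hB' hne x hx y hy u hu v hv
        rw [Set.eq_empty_iff_forall_notMem] at hd12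
        exact hd12 α ⟨hexy α hα, heuv α hα⟩
      · rw [Set.eq_empty_iff_forall_notMem]
        intro e he
        obtain ⟨⟨he1, x, hx, y, hy, hexy⟩, he2, u, hu, v, hv, heuv⟩ := he
        revert he1 hexy he2 heuv
        induction e using Sym2.ind with | _ α β =>
        intro he1 hexy he2 heuv
        have hαβ : α ≠ β := (T2.G.mem_edgeSet.mp he1).ne
        have hxy : x ≠ y := by
          rintro rfl
          have h1 := hexy α (Sym2.mem_mk_left α β)
          have h2 := hexy β (Sym2.mem_mk_right α β)
          rw [pathSet_self, Set.mem_singleton_iff] at h1 h2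
          exact hαβ (h1.trans h2.symm)
        have huv : u ≠ v := by
          rintro rfl
          have h1 := heuv α (Sym2.mem_mk_left α β)
          have h2 := heuv β (Sym2.mem_mk_right α β)
          rw [pathSet_self, Set.mem_singleton_iff] at h1 h2
          exact hαβ (h1.trans h2.symm)
        have hcross : ∀ z ∈ B, ∀ t ∈ B', z ≠ t := by
          intro z hz t ht hEq
          subst hEq
          exact hne ((hBx B hB z hz).trans (hBx B' hB' z ht).symm)
        have hQ : QDistinct x y u v :=
          ⟨hxy, hcross x hx u hu, hcross x hx v hv, hcross y hy u hu, hcross y hy v hv, huv⟩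
        have hd1 : displays T1 x y u v := hdisj1 B hB B' hB' hne x hx y hy u hu v hv
        have hnc : ¬ Compatible T1 T2 x y u v := by
          intro hc
          have hd2 := hc.1.mp hd1
          exact Set.eq_empty_iff_forall_notMem.mp hd2 α
            ⟨hexy α (Sym2.mem_mk_left α β), heuv α (Sym2.mem_mk_left α β)⟩
        obtain ⟨e', he', -, hleg⟩ := hhit x y u v hQ hd1 hnc
        rcases hleg with hleg | hleg
        · exact edge_cut_not_on_path T1 E' hE (hreach B hB x hx y hy) he' hleg
        · exact edge_cut_not_on_path T1 E' hE (hreach B' hB' u hu v hv) he' hleg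
  have hcard : F.card ≤ E'.card + 1 := by
    have hfin : Finite D.ConnectedComponent := Finite.of_surjective D.connectedComponentMk (fun c => c.exists_rep)
    let ψ : {B // B ∈ F} → D.ConnectedComponent := fun B =>
      D.connectedComponentMk (T1.leaf (hFmem B.1 B.2).choose)
    have hψ : Function.Injective ψ := by
      rintro ⟨B, hB⟩ ⟨B', hB'⟩ hEq
      have hspec : B = block (hFmem B hB).choose := (hFmem B hB).choose_spec
      have hspec' : B' = block (hFmem B' hB').choose := (hFmem B' hB').choose_spec
      have hr : D.Reachable (T1.leaf (hFmem B hB).choose) (T1.leaf (hFmem B' hB').choose) :=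
        SimpleGraph.ConnectedComponent.eq.mp hEq
      have : block (hFmem B hB).choose = block (hFmem B' hB').choose :=
        hblock_eq _ _ hr
      exact Subtype.ext (hspec.trans (this.trans hspec'.symm))
    calc F.card = Nat.card {B // B ∈ F} := (Nat.card_eq_finsetCard F).symm
      _ ≤ Nat.card D.ConnectedComponent := Nat.card_le_card_of_injective ψ hψ
      _ ≤ E'.card + 1 := card_cc_deleteEdges_le T1.G T1.isTree.isConnected E'
  refine ⟨⟨F, hAF, hcard, hreach⟩, ?_⟩
  rcases isEmpty_or_nonempty X with hX | hX
  · have hempty : {n | ∃ F₀ : Finset (Finset X), AgreementForest T1 T2 F₀ ∧ F₀.card = n + 1}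
        = ∅ := by
      rw [Set.eq_empty_iff_forall_notMem]
      rintro n ⟨F₀, hAF₀, hc₀⟩
      have hne : F₀.Nonempty := Finset.card_pos.mp (by omega)
      obtain ⟨B, hB⟩ := hne
      have hBne : B ≠ ∅ := fun h => hAF₀.1.1 (h ▸ hB)
      obtain ⟨x, -⟩ := Finset.nonempty_iff_ne_empty.mpr hBne
      exact hX.false x
    unfold dTBR
    rw [hempty, Nat.sInf_empty]
    exact Nat.zero_le _
  · have hFne : F.Nonempty := by
      obtain ⟨x⟩ := hX
      exact ⟨block x, Finset.mem_image_of_mem _ (Finset.mem_univ x)⟩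
    have h1 : 1 ≤ F.card := Finset.card_pos.mpr hFne
    have h2 : dTBR T1 T2 ≤ F.card - 1 := Nat.sInf_le ⟨F, hAF, by omega⟩
    omega
end

section
/- Let f be a 2-state character on the leaf set X of a tree T, let Q' be a set of pairwise T-leg-disjoint quartets with all leaves in X, and let f̄ be any extension of f to the vertices of T. For each quartet q ∈ Q' with T|_q = ab|cd, let β(q) be the number of pairs among {(a,b),(c,d)} whose two leaves receive different states under f. Then the parsimony score l_f(T) is at least the sum over q ∈ Q' of β(q). -/
open SimpleGraph

variable {X Y S : Type}

-- AUX

lemma walk_mut {V : Type*} {G : SimpleGraph V} (g : V → Fin 2) :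
    ∀ {u v : V} (p : G.Walk u v), g u ≠ g v →
      ∃ x y, G.Adj x y ∧ g x ≠ g y ∧ x ∈ p.support ∧ y ∈ p.support := by
  intro u v p
  induction p with
  | nil => intro h; exact absurd rfl h
  | @cons a b c hab p ih =>
    intro hne
    by_cases h : g a = g b
    · obtain ⟨x, y, hxy, hg, hx, hy⟩ := ih (h ▸ hne)
      exact ⟨x, y, hxy, hg, List.mem_cons_of_mem _ hx, List.mem_cons_of_mem _ hy⟩
    · exact ⟨a, b, hab, h, List.mem_cons_self, List.mem_cons_of_mem _ p.start_mem_support⟩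

lemma mem_path_dist {V : Type*} [DecidableEq V] {G : SimpleGraph V} {u v w : V}
    (p : G.Walk u v) (hl : p.length = G.dist u v) (hw : w ∈ p.support) :
    G.dist u w + G.dist w v = G.dist u v := by
  have hs := p.take_spec hw
  have hlen : (p.takeUntil w hw).length + (p.dropUntil w hw).length = p.length := by
    conv_rhs => rw [← hs]
    rw [SimpleGraph.Walk.length_append]
  have h1 := SimpleGraph.dist_le (p.takeUntil w hw)
  have h2 := SimpleGraph.dist_le (p.dropUntil w hw)
  have htri : G.dist u v ≤ G.dist u w + G.dist w v := by
    obtain ⟨p1, hp1⟩ := SimpleGraph.Reachable.exists_walk_length_eq_dist ⟨p.takeUntil w hw⟩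
    obtain ⟨p2, hp2⟩ := SimpleGraph.Reachable.exists_walk_length_eq_dist ⟨p.dropUntil w hw⟩
    have := SimpleGraph.dist_le (p1.append p2)
    rw [SimpleGraph.Walk.length_append, hp1, hp2] at this
    exact this
  omega

lemma exists_mut_edge {X : Type} (T : PTree X) (g : T.V → Fin 2) (u v : T.V)
    (h : g u ≠ g v) :
    ∃ e ∈ T.G.edgeSet, ¬ (Sym2.map g e).IsDiag ∧ ∀ w ∈ e, w ∈ T.pathSet u v := by
  obtain ⟨p, hp⟩ := T.isTree.isConnected.exists_walk_length_eq_dist u v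
  obtain ⟨x, y, hxy, hg, hx, hy⟩ := walk_mut g p h
  refine ⟨s(x, y), hxy, by simpa using hg, ?_⟩
  intro w hw
  rw [Sym2.mem_iff] at hw
  rcases hw with rfl | rfl
  · exact mem_path_dist p hp hx
  · exact mem_path_dist p hp hy

/-- the parsimony score of a 2-state character is at least the sum over a
set of pairwise leg-disjoint quartets of the number of bichromatic legs. -/
theorem lscore_ge_sum_beta
    {X : Type} [Fintype X] (T : PTree X) (f : X → Fin 2)
    (Q' : Finset (X × X × X × X))
    (hQ : ∀ q ∈ Q', QDistinct q.1 q.2.1 q.2.2.1 q.2.2.2 ∧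
      displays T q.1 q.2.1 q.2.2.1 q.2.2.2)
    (hld : ∀ q1 ∈ Q', ∀ q2 ∈ Q', q1 ≠ q2 → qlegs T q1 ∩ qlegs T q2 = ∅) :
    (∑ q ∈ Q', ((if f q.1 ≠ f q.2.1 then 1 else 0) +
      (if f q.2.2.1 ≠ f q.2.2.2 then 1 else 0))) ≤ T.lscore f := by
  classical
  have hne : {n | ∃ g : T.V → Fin 2, (∀ x, g (T.leaf x) = f x) ∧ T.mutCount g = n}.Nonempty := by
    refine ⟨_, fun v => if h : ∃ x, T.leaf x = v then f h.choose else 0, fun x => ?_, rfl⟩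
    have hx : ∃ x', T.leaf x' = T.leaf x := ⟨x, rfl⟩
    dsimp only
    rw [dif_pos hx]
    exact congrArg f (T.leaf_inj hx.choose_spec)
  refine le_csInf hne ?_
  rintro n ⟨g, hg, rfl⟩
  set M : Finset (Sym2 T.V) :=
    Finset.univ.filter (fun e => e ∈ T.G.edgeSet ∧ ¬ (Sym2.map g e).IsDiag) with hMdef
  have hM : T.mutCount g = M.card := by
    rw [PTree.mutCount, ← Set.ncard_coe_finset]
    congr 1
    ext e
    simp [hMdef]
  rw [hM]
  have key : ∀ q : X × X × X × X, ∃ E : Finset (Sym2 T.V), q ∈ Q' →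
      (E ⊆ M ∧
        ((if f q.1 ≠ f q.2.1 then 1 else 0) +
          (if f q.2.2.1 ≠ f q.2.2.2 then 1 else 0)) ≤ E.card ∧
        ∀ e ∈ E, ∀ w ∈ e, w ∈ qlegs T q) := by
    rintro ⟨a, b, c, d⟩
    by_cases hqQ : (a, b, c, d) ∈ Q'
    · obtain ⟨hdist, hdisp⟩ := hQ _ hqQ
      by_cases hab : f a ≠ f b
      · have gab : g (T.leaf a) ≠ g (T.leaf b) := by rw [hg, hg]; exact hab
        obtain ⟨e1, he1E, he1d, he1p⟩ := exists_mut_edge T g _ _ gab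
        by_cases hcd : f c ≠ f d
        · have gcd : g (T.leaf c) ≠ g (T.leaf d) := by rw [hg, hg]; exact hcd
          obtain ⟨e2, he2E, he2d, he2p⟩ := exists_mut_edge T g _ _ gcd
          have hne12 : e1 ≠ e2 := by
            intro hEq
            have hw1 := he1p e1.out.1 (Sym2.out_fst_mem e1)
            have hw2 := he2p e1.out.1 (hEq ▸ Sym2.out_fst_mem e1)
            have : e1.out.1 ∈ T.pathSet (T.leaf a) (T.leaf b) ∩
                T.pathSet (T.leaf c) (T.leaf d) := ⟨hw1, hw2⟩
            rw [hdisp] at this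
            exact this
          refine ⟨{e1, e2}, fun _ => ⟨?_, ?_, ?_⟩⟩
          · intro e he
            simp only [Finset.mem_insert, Finset.mem_singleton] at he
            rcases he with rfl | rfl
            · simp [hMdef, he1E, he1d]
            · simp [hMdef, he2E, he2d]
          · simp [hab, hcd, Finset.card_pair hne12]
          · intro e he w hw
            simp only [Finset.mem_insert, Finset.mem_singleton] at he
            rcases he with rfl | rfl
            · exact Or.inl (he1p w hw)
            · exact Or.inr (he2p w hw)
        · refine ⟨{e1}, fun _ => ⟨?_, ?_, ?_⟩⟩
          · intro e he
            simp only [Finset.mem_singleton] at he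
            subst he; simp [hMdef, he1E, he1d]
          · simp [hab, hcd]
          · intro e he w hw
            simp only [Finset.mem_singleton] at he
            subst he; exact Or.inl (he1p w hw)
      · by_cases hcd : f c ≠ f d
        · have gcd : g (T.leaf c) ≠ g (T.leaf d) := by rw [hg, hg]; exact hcd
          obtain ⟨e2, he2E, he2d, he2p⟩ := exists_mut_edge T g _ _ gcd
          refine ⟨{e2}, fun _ => ⟨?_, ?_, ?_⟩⟩
          · intro e he
            simp only [Finset.mem_singleton] at he
            subst he; simp [hMdef, he2E, he2d]
          · simp [hab, hcd]
          · intro e he w hw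
            simp only [Finset.mem_singleton] at he
            subst he; exact Or.inr (he2p w hw)
        · exact ⟨∅, fun _ => ⟨Finset.empty_subset _, by simp [hab, hcd], by simp⟩⟩
    · exact ⟨∅, fun h => absurd h hqQ⟩
  choose E hE using key
  calc (∑ q ∈ Q', ((if f q.1 ≠ f q.2.1 then 1 else 0) +
        (if f q.2.2.1 ≠ f q.2.2.2 then 1 else 0)))
      ≤ ∑ q ∈ Q', (E q).card := Finset.sum_le_sum (fun q hq => ((hE q) hq).2.1)
    _ = (Q'.biUnion E).card := by
        rw [Finset.card_biUnion]
        intro q1 hq1 q2 hq2 hne12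
        rw [Function.onFun, Finset.disjoint_left]
        intro e he1 he2
        have h1 := ((hE q1) hq1).2.2 e he1 e.out.1 (Sym2.out_fst_mem e)
        have h2 := ((hE q2) hq2).2.2 e he2 e.out.1 (Sym2.out_fst_mem e)
        have : e.out.1 ∈ qlegs T q1 ∩ qlegs T q2 := ⟨h1, h2⟩
        rw [hld q1 hq1 q2 hq2 hne12] at this
        exact this
    _ ≤ M.card := by
        apply Finset.card_le_card
        intro e he
        rw [Finset.mem_biUnion] at he
        obtain ⟨q, hq, heq⟩ := he
        exact ((hE q) hq).1 heq
end
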